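/- arXiv:2406.08992 — 4 statements merged into one kernel-verified Lean document; each statement's English description precedes it below -/
import Mathlib

section
/- Let n1, n2 be positive integers, let γ > 0 and ε > 0, and let c ∈ ℝ^{n1×n2}. Then the regularized marginal-to-transport-plan mapping S_{γ,ε} : ℝ^{n1} × ℝ^{n2} → ℝ^{n1×n2} is (Fréchet) differentiable at a point μ = (μ1, μ2) if and only if Ω_0(μ) = ∅, i.e., if and only if (α1)_i + (α2)_j − c_{ij} ≠ 0 for all indices (i, j), where (α1, α2) = F_{γ,ε}(μ). -/
noncomputable section

/-- The regularized dual system (for parameters γ, ε and cost c) associated with data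
(μ1, μ2), in the unknowns (α1, α2). -/
def DualSys {n1 n2 : ℕ} (γ ε : ℝ) (c : Fin n1 → Fin n2 → ℝ)
    (μ1 : Fin n1 → ℝ) (μ2 : Fin n2 → ℝ) (α1 : Fin n1 → ℝ) (α2 : Fin n2 → ℝ) : Prop :=
  (∀ i, (∑ j, max (α1 i + α2 j - c i j) 0) + γ * ε * α1 i = γ * μ1 i) ∧
  (∀ j, (∑ i, max (α1 i + α2 j - c i j) 0) + γ * ε * α2 j = γ * μ2 j)

/-- The regularized marginal-to-transport-plan mapping S_{γ,ε} associated with a solution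
operator F of the regularized dual system. -/
def Smap {n1 n2 : ℕ} (γ : ℝ) (c : Fin n1 → Fin n2 → ℝ)
    (F : (Fin n1 → ℝ) × (Fin n2 → ℝ) → (Fin n1 → ℝ) × (Fin n2 → ℝ))
    (μ : (Fin n1 → ℝ) × (Fin n2 → ℝ)) : Fin n1 → Fin n2 → ℝ :=
  fun i j => (1 / γ) * max ((F μ).1 i + (F μ).2 j - c i j) 0

/-!
The dual map `α ↦ marginals (plan c α) + γ ε α` is strongly monotone for the pairing
`⟨x, y⟩ = x₁ ⬝ᵥ y₁ + x₂ ⬝ᵥ y₂`, because the positive part is monotone; hence the solution operator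
`F` is Lipschitz. If no entry of `α₁ ⊕ α₂ - c` vanishes at `F μ`, the active set is locally
constant, so near `μ` the system is linear with an injective, hence invertible, matrix and `F` and
`S` are affine there. If the entry `(i, j)` vanishes, the entry `S_ij` attains its minimum `0` at
`μ`, while strong monotonicity forces it to grow linearly along the direction `(eᵢ, eⱼ)`: a
differentiable function cannot do that at a minimum.
-/

open Finset Filter Topology

section Marginals

variable {ι κ : Type*} [Fintype ι] [Fintype κ]

def pairing (x y : (ι → ℝ) × (κ → ℝ)) : ℝ := x.1 ⬝ᵥ y.1 + x.2 ⬝ᵥ y.2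

lemma pairing_add_left (x y z : (ι → ℝ) × (κ → ℝ)) :
    pairing (x + y) z = pairing x z + pairing y z := by
  simp only [pairing, Prod.fst_add, Prod.snd_add, add_dotProduct]
  ring

lemma pairing_smul_left (a : ℝ) (x y : (ι → ℝ) × (κ → ℝ)) :
    pairing (a • x) y = a * pairing x y := by
  simp only [pairing, Prod.smul_fst, Prod.smul_snd, smul_dotProduct, smul_eq_mul]
  ring

lemma norm_le_sqrt_dotProduct_self (v : ι → ℝ) : ‖v‖ ≤ √(v ⬝ᵥ v) :=
  (pi_norm_le_iff_of_nonneg (Real.sqrt_nonneg _)).2 fun i => Real.abs_le_sqrt <|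
    (sq (v i)).le.trans (single_le_sum (f := fun i => v i * v i) (fun i _ => mul_self_nonneg (v i))
      (mem_univ i))

lemma sq_norm_le_pairing_self (x : (ι → ℝ) × (κ → ℝ)) : ‖x‖ ^ 2 ≤ pairing x x := by
  have h1 : 0 ≤ x.1 ⬝ᵥ x.1 := sum_nonneg fun i _ => mul_self_nonneg _
  have h2 : 0 ≤ x.2 ⬝ᵥ x.2 := sum_nonneg fun i _ => mul_self_nonneg _
  have hx : ‖x‖ ≤ √(pairing x x) := max_le
    ((norm_le_sqrt_dotProduct_self x.1).trans (Real.sqrt_le_sqrt (by simp [pairing, h2])))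
    ((norm_le_sqrt_dotProduct_self x.2).trans (Real.sqrt_le_sqrt (by simp [pairing, h1])))
  calc ‖x‖ ^ 2 ≤ √(pairing x x) ^ 2 := pow_le_pow_left₀ (norm_nonneg x) hx 2
    _ = pairing x x := Real.sq_sqrt (add_nonneg h1 h2)

lemma dotProduct_le_card_mul_norm_mul_norm (v w : ι → ℝ) :
    v ⬝ᵥ w ≤ Fintype.card ι * (‖v‖ * ‖w‖) := by
  calc v ⬝ᵥ w ≤ ∑ _i : ι, ‖v‖ * ‖w‖ := sum_le_sum fun i _ =>
        (le_abs_self _).trans <| (abs_mul (v i) (w i)).trans_le <|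
          mul_le_mul (norm_le_pi_norm v i) (norm_le_pi_norm w i) (abs_nonneg _) (norm_nonneg _)
    _ = Fintype.card ι * (‖v‖ * ‖w‖) := by simp

lemma pairing_le_card_mul_norm_mul_norm (x y : (ι → ℝ) × (κ → ℝ)) :
    pairing x y ≤ (Fintype.card ι + Fintype.card κ) * (‖x‖ * ‖y‖) := by
  calc pairing x y
      ≤ Fintype.card ι * (‖x.1‖ * ‖y.1‖) + Fintype.card κ * (‖x.2‖ * ‖y.2‖) :=
        add_le_add (dotProduct_le_card_mul_norm_mul_norm _ _)
          (dotProduct_le_card_mul_norm_mul_norm _ _)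
    _ ≤ Fintype.card ι * (‖x‖ * ‖y‖) + Fintype.card κ * (‖x‖ * ‖y‖) := by
        gcongr
        exacts [norm_fst_le x, norm_fst_le y, norm_snd_le x, norm_snd_le y]
    _ = (Fintype.card ι + Fintype.card κ) * (‖x‖ * ‖y‖) := by ring

def marginals : (ι → κ → ℝ) →ₗ[ℝ] (ι → ℝ) × (κ → ℝ) where
  toFun X := (fun i => ∑ j, X i j, fun j => ∑ i, X i j)
  map_add' X Y := by ext <;> simp [sum_add_distrib]
  map_smul' a X := by ext <;> simp [mul_sum]

lemma pairing_marginals (X : ι → κ → ℝ) (a : (ι → ℝ) × (κ → ℝ)) :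
    pairing (marginals X) a = ∑ i, ∑ j, X i j * (a.1 i + a.2 j) := by
  simp only [pairing, marginals, LinearMap.coe_mk, AddHom.coe_mk, dotProduct, sum_mul, mul_add,
    sum_add_distrib]
  rw [sum_comm (γ := κ)]

lemma norm_marginals_le (X : ι → κ → ℝ) :
    ‖marginals X‖ ≤ (Fintype.card ι + Fintype.card κ) * ‖X‖ := by
  have hrow : ∀ i, ‖X i‖ ≤ ‖X‖ := norm_le_pi_norm X
  have hX : 0 ≤ (Fintype.card ι + Fintype.card κ : ℝ) * ‖X‖ := by positivity
  refine max_le ((pi_norm_le_iff_of_nonneg hX).2 fun i => ?_)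
    ((pi_norm_le_iff_of_nonneg hX).2 fun j => ?_)
  · calc ‖∑ j, X i j‖ ≤ ∑ j, ‖X i j‖ := norm_sum_le _ _
      _ ≤ ∑ _j : κ, ‖X‖ := sum_le_sum fun j _ => (norm_le_pi_norm (X i) j).trans (hrow i)
      _ ≤ (Fintype.card ι + Fintype.card κ) * ‖X‖ := by
        rw [sum_const, card_univ, nsmul_eq_mul]
        gcongr
        simp
  · calc ‖∑ i, X i j‖ ≤ ∑ i, ‖X i j‖ := norm_sum_le _ _
      _ ≤ ∑ _i : ι, ‖X‖ := sum_le_sum fun i _ => (norm_le_pi_norm (X i) j).trans (hrow i)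
      _ ≤ (Fintype.card ι + Fintype.card κ) * ‖X‖ := by
        rw [sum_const, card_univ, nsmul_eq_mul]
        gcongr
        simp

def maskedSum (m : ι → κ → ℝ) : (ι → ℝ) × (κ → ℝ) →ₗ[ℝ] ι → κ → ℝ where
  toFun x i j := m i j * (x.1 i + x.2 j)
  map_add' x y := by ext; simp only [Prod.fst_add, Prod.snd_add, Pi.add_apply]; ring
  map_smul' a x := by ext; simp only [Prod.smul_fst, Prod.smul_snd, Pi.smul_apply, smul_eq_mul,
    RingHom.id_apply]; ring

lemma injective_marginals_comp_maskedSum_add_smul_id {m : ι → κ → ℝ} (hm : ∀ i j, 0 ≤ m i j)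
    {t : ℝ} (ht : 0 < t) :
    Function.Injective
      (marginals ∘ₗ maskedSum m + t • LinearMap.id (R := ℝ) (M := (ι → ℝ) × (κ → ℝ))) := by
  rw [← LinearMap.ker_eq_bot, LinearMap.ker_eq_bot']
  intro x hx
  have hcoupling : 0 ≤ pairing (marginals (maskedSum m x)) x := by
    rw [pairing_marginals]
    exact sum_nonneg fun i _ => sum_nonneg fun j _ => by
      simpa [maskedSum, mul_assoc, ← sq] using mul_nonneg (hm i j) (sq_nonneg (x.1 i + x.2 j))
  have hzero : pairing (marginals (maskedSum m x)) x + t * pairing x x = 0 := by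
    have hx' : marginals (maskedSum m x) + t • x = 0 := by simpa using hx
    rw [← pairing_smul_left, ← pairing_add_left, hx']
    simp [pairing]
  have : ‖x‖ ^ 2 ≤ 0 := (sq_norm_le_pairing_self x).trans <| by nlinarith
  simpa using this

def plan (c : ι → κ → ℝ) (α : (ι → ℝ) × (κ → ℝ)) : ι → κ → ℝ :=
  fun i j => max (α.1 i + α.2 j - c i j) 0

lemma norm_plan_sub_plan_le (c : ι → κ → ℝ) (α β : (ι → ℝ) × (κ → ℝ)) :
    ‖plan c α - plan c β‖ ≤ 2 * ‖α - β‖ := by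
  have h2 : 0 ≤ 2 * ‖α - β‖ := by positivity
  refine (pi_norm_le_iff_of_nonneg h2).2 fun i => (pi_norm_le_iff_of_nonneg h2).2 fun j => ?_
  calc ‖plan c α i j - plan c β i j‖
      ≤ |(α.1 i + α.2 j - c i j) - (β.1 i + β.2 j - c i j)| := abs_max_sub_max_le_abs _ _ _
    _ = |(α - β).1 i + (α - β).2 j| := by
      simp only [Prod.fst_sub, Prod.snd_sub, Pi.sub_apply]
      ring_nf
    _ ≤ ‖(α - β).1 i‖ + ‖(α - β).2 j‖ := abs_add_le _ _
    _ ≤ ‖α - β‖ + ‖α - β‖ := add_le_add ((norm_le_pi_norm _ i).trans (norm_fst_le _))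
        ((norm_le_pi_norm _ j).trans (norm_snd_le _))
    _ = 2 * ‖α - β‖ := by ring

lemma pairing_marginals_plan_sub_plan_nonneg (c : ι → κ → ℝ) (α β : (ι → ℝ) × (κ → ℝ)) :
    0 ≤ pairing (marginals (plan c α - plan c β)) (α - β) := by
  rw [pairing_marginals]
  refine sum_nonneg fun i _ => sum_nonneg fun j _ => ?_
  have hmono : ∀ x y : ℝ, 0 ≤ (max x 0 - max y 0) * (x - y) := fun x y => by
    rcases le_total x y with h | h
    · exact mul_nonneg_of_nonpos_of_nonpos (sub_nonpos.2 (max_le_max_right 0 h)) (sub_nonpos.2 h)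
    · exact mul_nonneg (sub_nonneg.2 (max_le_max_right 0 h)) (sub_nonneg.2 h)
  refine (hmono (α.1 i + α.2 j - c i j) (β.1 i + β.2 j - c i j)).trans_eq ?_
  simp only [plan, Pi.sub_apply, Prod.fst_sub, Prod.snd_sub]
  ring

def activeMask (c : ι → κ → ℝ) (α : (ι → ℝ) × (κ → ℝ)) : ι → κ → ℝ :=
  fun i j => if 0 < α.1 i + α.2 j - c i j then 1 else 0

lemma eventually_plan_eq_add_maskedSum {c : ι → κ → ℝ} {α₀ : (ι → ℝ) × (κ → ℝ)}
    (h : ∀ i j, α₀.1 i + α₀.2 j - c i j ≠ 0) :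
    ∀ᶠ α in 𝓝 α₀, plan c α = plan c α₀ + maskedSum (activeMask c α₀) (α - α₀) := by
  have hev : ∀ i j, ∀ᶠ α in 𝓝 α₀,
      plan c α i j = plan c α₀ i j + maskedSum (activeMask c α₀) (α - α₀) i j := fun i j => by
    have hcont : Continuous fun α : (ι → ℝ) × (κ → ℝ) => α.1 i + α.2 j - c i j := by fun_prop
    simp only [plan, maskedSum, activeMask, LinearMap.coe_mk, AddHom.coe_mk, Prod.fst_sub,
      Prod.snd_sub, Pi.sub_apply]
    rcases (h i j).lt_or_gt with hneg | hpos
    · filter_upwards [hcont.continuousAt.eventually (gt_mem_nhds hneg)] with α hα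
      simp [hneg.le, hα.le, hneg.not_gt]
    · filter_upwards [hcont.continuousAt.eventually (lt_mem_nhds hpos)] with α hα
      simp only [hpos, hα.le, hpos.le, max_eq_left, if_true]
      ring
  filter_upwards [eventually_all.2 fun i => eventually_all.2 (hev i)] with α hα
  ext i j
  exact hα i j

end Marginals

theorem IsLocalMin.not_differentiableAt_of_eventually_linear_growth {E : Type*}
    [NormedAddCommGroup E] [NormedSpace ℝ E] {f : E → ℝ} {x v : E} {κ : ℝ}
    (hmin : IsLocalMin f x) (hκ : 0 < κ)
    (hgrowth : ∀ᶠ t in 𝓝[>] (0 : ℝ), f x + κ * t ≤ f (x + t • v)) :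
    ¬DifferentiableAt ℝ f x := by
  intro hd
  have hline : HasDerivAt (fun t : ℝ => x + t • v) v 0 := by
    simpa using ((hasDerivAt_id (0 : ℝ)).smul_const v).const_add x
  have hφ : HasDerivAt (fun t : ℝ => f (x + t • v)) 0 0 := by
    have hf : HasFDerivAt f (0 : E →L[ℝ] ℝ) (x + (0 : ℝ) • v) := by
      simpa [hmin.fderiv_eq_zero] using hd.hasFDerivAt
    have h := hf.comp_hasDerivAt (0 : ℝ) hline
    simp only [zero_apply] at h
    exact h
  have hslope : Tendsto (slope (fun t : ℝ => f (x + t • v)) 0) (𝓝[>] 0) (𝓝 0) :=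
    (hasDerivAt_iff_tendsto_slope.1 hφ).mono_left (nhdsWithin_mono _ fun t ht => ne_of_gt ht)
  have hκle : ∀ᶠ t in 𝓝[>] (0 : ℝ), κ ≤ slope (fun t : ℝ => f (x + t • v)) 0 t := by
    filter_upwards [hgrowth, self_mem_nhdsWithin] with t ht htpos
    rw [slope_def_field, zero_smul, add_zero, sub_zero, le_div_iff₀ htpos]
    linarith
  exact hκ.not_ge (ge_of_tendsto hslope hκle)

namespace DualSys

variable {n1 n2 : ℕ} {γ ε : ℝ} {c : Fin n1 → Fin n2 → ℝ}
  {μ ν α β : (Fin n1 → ℝ) × (Fin n2 → ℝ)}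

lemma iff_marginals_plan :
    DualSys γ ε c μ.1 μ.2 α.1 α.2 ↔ marginals (plan c α) + (γ * ε) • α = γ • μ := by
  simp only [DualSys, Prod.ext_iff, funext_iff, marginals, plan, LinearMap.coe_mk, AddHom.coe_mk,
    Prod.fst_add, Prod.snd_add, Prod.smul_fst, Prod.smul_snd, Pi.add_apply, Pi.smul_apply,
    smul_eq_mul]

lemma smul_sub_eq (hμ : DualSys γ ε c μ.1 μ.2 α.1 α.2) (hν : DualSys γ ε c ν.1 ν.2 β.1 β.2) :
    γ • (μ - ν) = marginals (plan c α - plan c β) + (γ * ε) • (α - β) := by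
  rw [smul_sub, ← iff_marginals_plan.1 hμ, ← iff_marginals_plan.1 hν, map_sub, smul_sub]
  abel

lemma mul_pairing_self_le (hγ : 0 < γ) (hμ : DualSys γ ε c μ.1 μ.2 α.1 α.2)
    (hν : DualSys γ ε c ν.1 ν.2 β.1 β.2) :
    ε * pairing (α - β) (α - β) ≤ pairing (μ - ν) (α - β) := by
  have h := congrArg (pairing · (α - β)) (smul_sub_eq hμ hν)
  simp only [pairing_smul_left, pairing_add_left] at h
  have := pairing_marginals_plan_sub_plan_nonneg c α β
  refine le_of_mul_le_mul_left ?_ hγ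
  linarith

lemma mul_norm_sub_le_mul_norm_data_sub (hγ : 0 < γ) (hε : 0 ≤ ε)
    (hμ : DualSys γ ε c μ.1 μ.2 α.1 α.2) (hν : DualSys γ ε c ν.1 ν.2 β.1 β.2) :
    ε * ‖α - β‖ ≤ (n1 + n2) * ‖μ - ν‖ := by
  have hmono := mul_pairing_self_le hγ hμ hν
  have hsq := sq_norm_le_pairing_self (α - β)
  have hle := pairing_le_card_mul_norm_mul_norm (μ - ν) (α - β)
  simp only [Fintype.card_fin] at hle
  rcases (norm_nonneg (α - β)).eq_or_lt with h0 | hpos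
  · rw [← h0, mul_zero]
    positivity
  · refine le_of_mul_le_mul_right ?_ hpos
    nlinarith

lemma mul_norm_data_sub_le_mul_norm_sub (hγ : 0 < γ) (hε : 0 ≤ ε)
    (hμ : DualSys γ ε c μ.1 μ.2 α.1 α.2) (hν : DualSys γ ε c ν.1 ν.2 β.1 β.2) :
    γ * ‖μ - ν‖ ≤ (2 * (n1 + n2) + γ * ε) * ‖α - β‖ := by
  calc γ * ‖μ - ν‖ = ‖γ • (μ - ν)‖ := by rw [norm_smul, Real.norm_of_nonneg hγ.le]
    _ = ‖marginals (plan c α - plan c β) + (γ * ε) • (α - β)‖ := by rw [smul_sub_eq hμ hν]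
    _ ≤ (n1 + n2) * (2 * ‖α - β‖) + γ * ε * ‖α - β‖ := by
      refine (norm_add_le _ _).trans (add_le_add ?_ ?_)
      · simpa using (norm_marginals_le _).trans
          (mul_le_mul_of_nonneg_left (norm_plan_sub_plan_le c α β) (by positivity))
      · rw [norm_smul, Real.norm_of_nonneg (by positivity)]
    _ = (2 * (n1 + n2) + γ * ε) * ‖α - β‖ := by ring

end DualSys

section SolutionOperator

variable {n1 n2 : ℕ} {γ ε : ℝ} {c : Fin n1 → Fin n2 → ℝ}
  {F : (Fin n1 → ℝ) × (Fin n2 → ℝ) → (Fin n1 → ℝ) × (Fin n2 → ℝ)}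
  {μ : (Fin n1 → ℝ) × (Fin n2 → ℝ)}

lemma continuous_of_dualSys (hγ : 0 < γ) (hε : 0 < ε)
    (hF : ∀ μ : (Fin n1 → ℝ) × (Fin n2 → ℝ), DualSys γ ε c μ.1 μ.2 (F μ).1 (F μ).2) :
    Continuous F := by
  refine (LipschitzWith.of_dist_le' (K := (n1 + n2) / ε) fun μ ν => ?_).continuous
  rw [dist_eq_norm, dist_eq_norm, div_mul_eq_mul_div, le_div_iff₀ hε, mul_comm]
  exact (hF μ).mul_norm_sub_le_mul_norm_data_sub hγ hε.le (hF ν)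

lemma eventually_plan_solution_eq (hγ : 0 < γ) (hε : 0 < ε)
    (hF : ∀ μ : (Fin n1 → ℝ) × (Fin n2 → ℝ), DualSys γ ε c μ.1 μ.2 (F μ).1 (F μ).2)
    (hne : ∀ i j, (F μ).1 i + (F μ).2 j - c i j ≠ 0) :
    ∀ᶠ ν in 𝓝 μ, plan c (F ν) = plan c (F μ) + maskedSum (activeMask c (F μ)) (F ν - F μ) :=
  (continuous_of_dualSys hγ hε hF).continuousAt.eventually (eventually_plan_eq_add_maskedSum hne)

lemma differentiableAt_of_dualSys (hγ : 0 < γ) (hε : 0 < ε)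
    (hF : ∀ μ : (Fin n1 → ℝ) × (Fin n2 → ℝ), DualSys γ ε c μ.1 μ.2 (F μ).1 (F μ).2)
    (hne : ∀ i j, (F μ).1 i + (F μ).2 j - c i j ≠ 0) : DifferentiableAt ℝ F μ := by
  set A := marginals ∘ₗ maskedSum (activeMask c (F μ)) +
    (γ * ε) • LinearMap.id (R := ℝ) (M := (Fin n1 → ℝ) × (Fin n2 → ℝ))
  have hA : Function.Injective A := injective_marginals_comp_maskedSum_add_smul_id
    (fun i j => by unfold activeMask; split_ifs <;> norm_num) (mul_pos hγ hε)
  set L := LinearMap.toContinuousLinearMap (LinearEquiv.ofInjectiveEndo A hA).symm.toLinearMap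
  have hloc : F =ᶠ[𝓝 μ] fun ν => F μ + L (γ • (ν - μ)) := by
    filter_upwards [eventually_plan_solution_eq hγ hε hF hne] with ν hν
    have hAν : A (F ν - F μ) = γ • (ν - μ) := by
      rw [(hF ν).smul_sub_eq (hF μ), hν, add_sub_cancel_left]
      rfl
    rw [← hAν]
    change F ν = F μ + (LinearEquiv.ofInjectiveEndo A hA).symm
      (LinearEquiv.ofInjectiveEndo A hA (F ν - F μ))
    rw [LinearEquiv.symm_apply_apply, add_sub_cancel]
  refine DifferentiableAt.congr_of_eventuallyEq ?_ hloc
  fun_prop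

lemma differentiableAt_Smap_of_ne_zero (hγ : 0 < γ) (hε : 0 < ε)
    (hF : ∀ μ : (Fin n1 → ℝ) × (Fin n2 → ℝ), DualSys γ ε c μ.1 μ.2 (F μ).1 (F μ).2)
    (hne : ∀ i j, (F μ).1 i + (F μ).2 j - c i j ≠ 0) : DifferentiableAt ℝ (Smap γ c F) μ := by
  set M := LinearMap.toContinuousLinearMap (maskedSum (activeMask c (F μ)))
  have hloc : Smap γ c F =ᶠ[𝓝 μ] fun ν => (1 / γ) • (plan c (F μ) + M (F ν - F μ)) := by
    filter_upwards [eventually_plan_solution_eq hγ hε hF hne] with ν hν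
    change _ = (1 / γ) • (plan c (F μ) + maskedSum (activeMask c (F μ)) (F ν - F μ))
    rw [← hν]
    rfl
  have hFμ := differentiableAt_of_dualSys hγ hε hF hne
  refine DifferentiableAt.congr_of_eventuallyEq ?_ hloc
  fun_prop

lemma mul_le_entry_add_smul_single_of_eq_zero (hγ : 0 < γ) (hε : 0 < ε)
    (hF : ∀ μ : (Fin n1 → ℝ) × (Fin n2 → ℝ), DualSys γ ε c μ.1 μ.2 (F μ).1 (F μ).2)
    {i : Fin n1} {j : Fin n2} (hij : (F μ).1 i + (F μ).2 j - c i j = 0) {t : ℝ} (ht : 0 < t) :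
    ε * γ ^ 2 / (2 * (n1 + n2) + γ * ε) ^ 2 * t ≤
      (F (μ + t • (Pi.single i 1, Pi.single j 1))).1 i
        + (F (μ + t • (Pi.single i 1, Pi.single j 1))).2 j - c i j := by
  set d : (Fin n1 → ℝ) × (Fin n2 → ℝ) := (Pi.single i 1, Pi.single j 1)
  set ν := μ + t • d
  set e := (F ν).1 i + (F ν).2 j - c i j
  set C := 2 * ((n1 : ℝ) + n2) + γ * ε
  have hC : 0 < C := by positivity
  have hpair : pairing (ν - μ) (F ν - F μ) = t * e := by
    rw [add_sub_cancel_left, pairing_smul_left]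
    congr 1
    simp only [pairing, d, single_dotProduct, one_mul, Prod.fst_sub, Prod.snd_sub, Pi.sub_apply]
    linarith
  have hmono := (hF ν).mul_pairing_self_le hγ (hF μ)
  have hsq := sq_norm_le_pairing_self (F ν - F μ)
  have hd : 1 ≤ ‖d‖ := by simpa [d] using (norm_le_pi_norm d.1 i).trans (norm_fst_le d)
  have hlower : γ * t ≤ C * ‖F ν - F μ‖ := calc
    γ * t ≤ γ * ‖ν - μ‖ := by
      rw [add_sub_cancel_left, norm_smul, Real.norm_of_nonneg ht.le]
      gcongr
      exact le_mul_of_one_le_right ht.le hd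
    _ ≤ C * ‖F ν - F μ‖ := (hF ν).mul_norm_data_sub_le_mul_norm_sub hγ hε.le (hF μ)
  have hquad : ε * (γ * t) ^ 2 ≤ C ^ 2 * (t * e) := calc
    ε * (γ * t) ^ 2 ≤ ε * (C * ‖F ν - F μ‖) ^ 2 := by gcongr
    _ ≤ C ^ 2 * (ε * pairing (F ν - F μ) (F ν - F μ)) := by
      rw [mul_pow]
      nlinarith [mul_le_mul_of_nonneg_left hsq (by positivity : (0 : ℝ) ≤ ε * C ^ 2)]
    _ ≤ C ^ 2 * (t * e) := by rw [← hpair]; gcongr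
  rw [div_mul_eq_mul_div, div_le_iff₀ (by positivity)]
  nlinarith

lemma not_differentiableAt_Smap_of_eq_zero (hγ : 0 < γ) (hε : 0 < ε)
    (hF : ∀ μ : (Fin n1 → ℝ) × (Fin n2 → ℝ), DualSys γ ε c μ.1 μ.2 (F μ).1 (F μ).2)
    {i : Fin n1} {j : Fin n2} (hij : (F μ).1 i + (F μ).2 j - c i j = 0) :
    ¬DifferentiableAt ℝ (Smap γ c F) μ := fun hd => by
  have hγ' : 0 ≤ 1 / γ := by positivity
  have hmin : IsLocalMin (fun ν => Smap γ c F ν i j) μ :=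
    Eventually.of_forall fun ν => by
      simpa [Smap, hij] using mul_nonneg hγ' (le_max_right _ _)
  refine hmin.not_differentiableAt_of_eventually_linear_growth
    (v := (Pi.single i 1, Pi.single j 1))
    (κ := 1 / γ * (ε * γ ^ 2 / (2 * (n1 + n2) + γ * ε) ^ 2)) (by positivity) ?_
    (differentiableAt_pi.1 (differentiableAt_pi.1 hd i) j)
  filter_upwards [self_mem_nhdsWithin] with t ht
  simp only [Smap, hij, max_self, mul_zero, zero_add, mul_assoc]
  exact mul_le_mul_of_nonneg_left
    ((mul_le_entry_add_smul_single_of_eq_zero hγ hε hF hij ht).trans (le_max_left _ _)) hγ'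

end SolutionOperator

theorem Smap_differentiable_iff_omega_zero_empty_general (n1 n2 : ℕ)
    (γ ε : ℝ) (hγ : 0 < γ) (hε : 0 < ε) (c : Fin n1 → Fin n2 → ℝ)
    (F : (Fin n1 → ℝ) × (Fin n2 → ℝ) → (Fin n1 → ℝ) × (Fin n2 → ℝ))
    (hF : ∀ μ : (Fin n1 → ℝ) × (Fin n2 → ℝ), DualSys γ ε c μ.1 μ.2 (F μ).1 (F μ).2)
    (μ : (Fin n1 → ℝ) × (Fin n2 → ℝ)) :
    DifferentiableAt ℝ (Smap γ c F) μ ↔ ∀ i j, (F μ).1 i + (F μ).2 j - c i j ≠ 0 :=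
  ⟨fun hd _ _ hij => not_differentiableAt_Smap_of_eq_zero hγ hε hF hij hd,
    differentiableAt_Smap_of_ne_zero hγ hε hF⟩

/-- S_{γ,ε} is (Fréchet) differentiable at μ if and only if Ω_0(μ) = ∅. -/
theorem Smap_differentiable_iff_omega_zero_empty (n1 n2 : ℕ) (hn1 : 0 < n1) (hn2 : 0 < n2)
    (γ ε : ℝ) (hγ : 0 < γ) (hε : 0 < ε) (c : Fin n1 → Fin n2 → ℝ)
    (F : (Fin n1 → ℝ) × (Fin n2 → ℝ) → (Fin n1 → ℝ) × (Fin n2 → ℝ))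
    (hF : ∀ μ : (Fin n1 → ℝ) × (Fin n2 → ℝ), DualSys γ ε c μ.1 μ.2 (F μ).1 (F μ).2)
    (μ : (Fin n1 → ℝ) × (Fin n2 → ℝ)) :
    DifferentiableAt ℝ (Smap γ c F) μ ↔ ∀ i j, (F μ).1 i + (F μ).2 j - c i j ≠ 0 :=
  Smap_differentiable_iff_omega_zero_empty_general n1 n2 γ ε hγ hε c F hF μ
end
end

section
/- Let n1, n2 be positive integers, let γ > 0 and ε > 0, and let c ∈ ℝ^{n1×n2}. Let μ = (μ1, μ2) ∈ ℝ^{n1} × ℝ^{n2} be a point with Ω_0(μ) = ∅. Then: (i) the matrix N(Ω_+(μ)) + γ ε I ∈ ℝ^{(n1+n2)×(n1+n2)} is invertible; and (ii) the Fréchet derivative of S_{γ,ε} at μ is the linear map h ↦ M(Ω_+(μ))(η1 ⊕ η2), where (η1, η2) := (N(Ω_+(μ)) + γ ε I)^{-1} h. -/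
noncomputable section

/-- The set Ω_+(μ) of strictly positive indices. -/
def omegaPlus {n1 n2 : ℕ} (c : Fin n1 → Fin n2 → ℝ)
    (F : (Fin n1 → ℝ) × (Fin n2 → ℝ) → (Fin n1 → ℝ) × (Fin n2 → ℝ))
    (μ : (Fin n1 → ℝ) × (Fin n2 → ℝ)) : Set (Fin n1 × Fin n2) :=
  {p | 0 < (F μ).1 p.1 + (F μ).2 p.2 - c p.1 p.2}

/-- The characteristic matrix χ(A) of an index set A. -/
def chiMat {n1 n2 : ℕ} (A : Set (Fin n1 × Fin n2)) : Fin n1 → Fin n2 → ℝ :=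
  fun i j => Set.indicator A (fun _ => (1 : ℝ)) (i, j)

/-- The system matrix N(A) ∈ ℝ^{(n1+n2)×(n1+n2)} associated with an index set A,
indexed by `Fin n1 ⊕ Fin n2`. -/
def sysMat {n1 n2 : ℕ} (A : Set (Fin n1 × Fin n2)) :
    Matrix (Fin n1 ⊕ Fin n2) (Fin n1 ⊕ Fin n2) ℝ :=
  Matrix.of fun p q =>
    match p, q with
    | Sum.inl i, Sum.inl i' => if i = i' then ∑ j, chiMat A i j else 0
    | Sum.inl i, Sum.inr j => chiMat A i j
    | Sum.inr j, Sum.inl i => chiMat A i j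
    | Sum.inr j, Sum.inr j' => if j = j' then ∑ i, chiMat A i j else 0



lemma max_mono_mul (s t : ℝ) : 0 ≤ (max s 0 - max t 0) * (s - t) := by
  rcases le_total s t with h | h
  · have h1 : max s 0 ≤ max t 0 := max_le_max h le_rfl
    nlinarith
  · have h1 : max t 0 ≤ max s 0 := max_le_max h le_rfl
    exact mul_nonneg (by linarith) (by linarith)

lemma lipschitz_bound {n1 n2 : ℕ} (hn1 : 0 < n1) {γ ε : ℝ} (hγ : 0 < γ) (hε : 0 < ε)
    (c : Fin n1 → Fin n2 → ℝ) {μ1 β1 μ2 β2 : _} {μ1' β1' μ2' β2' : _}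
    (hA : DualSys γ ε c μ1 μ2 β1 β2) (hB : DualSys γ ε c μ1' μ2' β1' β2')
    {K : ℝ} (hK1 : ∀ i, |μ1 i - μ1' i| ≤ K) (hK2 : ∀ j, |μ2 j - μ2' j| ≤ K) :
    (∀ i, |β1 i - β1' i| ≤ (n1 + n2) * K / ε) ∧
    (∀ j, |β2 j - β2' j| ≤ (n1 + n2) * K / ε) := by
  set d : Fin n1 ⊕ Fin n2 → ℝ := Sum.elim (fun i => β1 i - β1' i) (fun j => β2 j - β2' j) with hd
  set e : Fin n1 ⊕ Fin n2 → ℝ := Sum.elim (fun i => μ1 i - μ1' i) (fun j => μ2 j - μ2' j) with he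
  have hKnn : 0 ≤ K := le_trans (abs_nonneg _) (hK1 ⟨0, hn1⟩)
  have hKe : ∀ k, |e k| ≤ K := by rintro (i | j) <;> simp [he] <;> [exact hK1 i; exact hK2 j]
  -- row and column difference equations
  have hrow : ∀ i, (∑ j, (max (β1 i + β2 j - c i j) 0 - max (β1' i + β2' j - c i j) 0))
      + γ * ε * d (Sum.inl i) = γ * e (Sum.inl i) := by
    intro i
    have h1 := hA.1 i; have h2 := hB.1 i
    rw [Finset.sum_sub_distrib]
    simp only [hd, he, Sum.elim_inl]
    ring_nf
    ring_nf at h1 h2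
    linarith
  have hcol : ∀ j, (∑ i, (max (β1 i + β2 j - c i j) 0 - max (β1' i + β2' j - c i j) 0))
      + γ * ε * d (Sum.inr j) = γ * e (Sum.inr j) := by
    intro j
    have h1 := hA.2 j; have h2 := hB.2 j
    rw [Finset.sum_sub_distrib]
    simp only [hd, he, Sum.elim_inr]
    ring_nf; ring_nf at h1 h2; linarith
  -- key inequality
  have cross : 0 ≤ ∑ i, ∑ j, (max (β1 i + β2 j - c i j) 0 - max (β1' i + β2' j - c i j) 0)
      * (d (Sum.inl i) + d (Sum.inr j)) := by
    refine Finset.sum_nonneg fun i _ => Finset.sum_nonneg fun j _ => ?_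
    have := max_mono_mul (β1 i + β2 j - c i j) (β1' i + β2' j - c i j)
    simp only [hd, Sum.elim_inl, Sum.elim_inr]
    have heq : (β1 i + β2 j - c i j) - (β1' i + β2' j - c i j)
        = (β1 i - β1' i) + (β2 j - β2' j) := by ring
    rwa [heq] at this
  have key : γ * ε * ∑ k, d k ^ 2 ≤ γ * ∑ k, e k * d k := by
    have h1 : ∀ i, (∑ j, (max (β1 i + β2 j - c i j) 0 - max (β1' i + β2' j - c i j) 0)
        * d (Sum.inl i)) + γ * ε * d (Sum.inl i) ^ 2 = γ * (e (Sum.inl i) * d (Sum.inl i)) := by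
      intro i; rw [← Finset.sum_mul]; linear_combination d (Sum.inl i) * hrow i
    have h2 : ∀ j, (∑ i, (max (β1 i + β2 j - c i j) 0 - max (β1' i + β2' j - c i j) 0)
        * d (Sum.inr j)) + γ * ε * d (Sum.inr j) ^ 2 = γ * (e (Sum.inr j) * d (Sum.inr j)) := by
      intro j; rw [← Finset.sum_mul]; linear_combination d (Sum.inr j) * hcol j
    have H1 : (∑ i, ∑ j, (max (β1 i + β2 j - c i j) 0 - max (β1' i + β2' j - c i j) 0)
        * d (Sum.inl i)) + γ * ε * ∑ i, d (Sum.inl i) ^ 2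
        = γ * ∑ i, e (Sum.inl i) * d (Sum.inl i) := by
      rw [Finset.mul_sum, Finset.mul_sum, ← Finset.sum_add_distrib]
      exact Finset.sum_congr rfl fun i _ => h1 i
    have H2 : (∑ j, ∑ i, (max (β1 i + β2 j - c i j) 0 - max (β1' i + β2' j - c i j) 0)
        * d (Sum.inr j)) + γ * ε * ∑ j, d (Sum.inr j) ^ 2
        = γ * ∑ j, e (Sum.inr j) * d (Sum.inr j) := by
      rw [Finset.mul_sum, Finset.mul_sum, ← Finset.sum_add_distrib]
      exact Finset.sum_congr rfl fun j _ => h2 j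
    have hswap : (∑ j, ∑ i, (max (β1 i + β2 j - c i j) 0 - max (β1' i + β2' j - c i j) 0)
        * d (Sum.inr j)) = ∑ i, ∑ j, (max (β1 i + β2 j - c i j) 0
          - max (β1' i + β2' j - c i j) 0) * d (Sum.inr j) := Finset.sum_comm
    have hcomb : (∑ i, ∑ j, (max (β1 i + β2 j - c i j) 0 - max (β1' i + β2' j - c i j) 0)
          * d (Sum.inl i))
        + (∑ i, ∑ j, (max (β1 i + β2 j - c i j) 0 - max (β1' i + β2' j - c i j) 0)
          * d (Sum.inr j))
        = ∑ i, ∑ j, (max (β1 i + β2 j - c i j) 0 - max (β1' i + β2' j - c i j) 0)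
          * (d (Sum.inl i) + d (Sum.inr j)) := by
      rw [← Finset.sum_add_distrib]
      refine Finset.sum_congr rfl fun i _ => ?_
      rw [← Finset.sum_add_distrib]
      exact Finset.sum_congr rfl fun j _ => by ring
    rw [hswap] at H2
    rw [Fintype.sum_sum_type (fun k => d k ^ 2), Fintype.sum_sum_type (fun k => e k * d k)]
    nlinarith [H1, H2, cross, hcomb]
  -- conclude pointwise bound
  have hne : Nonempty (Fin n1 ⊕ Fin n2) := ⟨Sum.inl ⟨0, hn1⟩⟩
  obtain ⟨k0, -, hk0⟩ := Finset.exists_mem_eq_sup' (Finset.univ_nonempty (α := Fin n1 ⊕ Fin n2))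
    (fun k => |d k|)
  set M : ℝ := Finset.univ.sup' Finset.univ_nonempty (fun k => |d k|) with hM
  have hMk : ∀ k, |d k| ≤ M := fun k => Finset.le_sup' (fun k => |d k|) (Finset.mem_univ k)
  have hM0 : 0 ≤ M := le_trans (abs_nonneg _) (hMk k0)
  have hMsq : M ^ 2 ≤ ∑ k, d k ^ 2 := by
    have : M ^ 2 = d k0 ^ 2 := by rw [hk0, sq_abs]
    rw [this]
    exact Finset.single_le_sum (f := fun k => d k ^ 2) (fun k _ => sq_nonneg _)
      (Finset.mem_univ k0)
  have hsum_ed : ∑ k, e k * d k ≤ (n1 + n2) * (K * M) := by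
    calc ∑ k, e k * d k ≤ ∑ k : Fin n1 ⊕ Fin n2, K * M := by
          refine Finset.sum_le_sum fun k _ => ?_
          calc e k * d k ≤ |e k * d k| := le_abs_self _
            _ = |e k| * |d k| := abs_mul _ _
            _ ≤ K * M := mul_le_mul (hKe k) (hMk k) (abs_nonneg _) hKnn
      _ = (n1 + n2) * (K * M) := by
          rw [Finset.sum_const, Finset.card_univ, Fintype.card_sum, Fintype.card_fin,
            Fintype.card_fin, nsmul_eq_mul]; push_cast; ring
  have hfin : M ≤ (n1 + n2) * K / ε := by
    rcases eq_or_lt_of_le hM0 with h | h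
    · rw [← h]; positivity
    · rw [le_div_iff₀ hε]
      have h5a : γ * ε * M ^ 2 ≤ γ * ε * ∑ k, d k ^ 2 :=
        mul_le_mul_of_nonneg_left hMsq (by positivity)
      have h5b : γ * ∑ k, e k * d k ≤ γ * ((n1 + n2) * (K * M)) :=
        mul_le_mul_of_nonneg_left hsum_ed hγ.le
      have h5 := le_trans h5a (le_trans key h5b)
      nlinarith [h5, mul_pos hγ h, h, hγ]
  exact ⟨fun i => le_trans (hMk (Sum.inl i)) hfin, fun j => le_trans (hMk (Sum.inr j)) hfin⟩


variable {n1 n2 : ℕ} (A : Set (Fin n1 × Fin n2)) (t : ℝ) (v : Fin n1 ⊕ Fin n2 → ℝ)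

lemma sysMat_mulVec_inl (i : Fin n1) :
    ((sysMat A + t • (1 : Matrix (Fin n1 ⊕ Fin n2) (Fin n1 ⊕ Fin n2) ℝ)).mulVec v) (Sum.inl i)
      = (∑ j, chiMat A i j * (v (Sum.inl i) + v (Sum.inr j))) + t * v (Sum.inl i) := by
  simp only [Matrix.mulVec, dotProduct, Fintype.sum_sum_type, Matrix.add_apply,
    Matrix.smul_apply, Matrix.one_apply, sysMat, Matrix.of_apply, smul_eq_mul]
  simp only [Sum.inl.injEq, mul_ite, mul_zero, mul_one, ite_true, reduceCtorEq, if_false,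
    add_mul, ite_mul, zero_mul]
  rw [Finset.sum_add_distrib, Finset.sum_ite_eq Finset.univ i
    (fun i' => (∑ j, chiMat A i j) * v (Sum.inl i')), Finset.sum_ite_eq Finset.univ i
    (fun i' => t * v (Sum.inl i'))]
  simp only [Finset.mem_univ, if_true, Finset.sum_mul, add_zero]
  rw [Finset.sum_congr rfl (fun j _ => mul_add (chiMat A i j) (v (Sum.inl i)) (v (Sum.inr j))),
    Finset.sum_add_distrib]
  ring

lemma sysMat_mulVec_inr (j : Fin n2) :
    ((sysMat A + t • (1 : Matrix (Fin n1 ⊕ Fin n2) (Fin n1 ⊕ Fin n2) ℝ)).mulVec v) (Sum.inr j)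
      = (∑ i, chiMat A i j * (v (Sum.inl i) + v (Sum.inr j))) + t * v (Sum.inr j) := by
  simp only [Matrix.mulVec, dotProduct, Fintype.sum_sum_type, Matrix.add_apply,
    Matrix.smul_apply, Matrix.one_apply, sysMat, Matrix.of_apply, smul_eq_mul]
  simp only [Sum.inr.injEq, mul_ite, mul_zero, mul_one, ite_true, reduceCtorEq, if_false,
    add_mul, ite_mul, zero_mul]
  simp only [Finset.sum_add_distrib, Finset.sum_ite_eq, Finset.mem_univ, if_true,
    Finset.sum_const_zero, add_zero, Finset.sum_mul]
  rw [Finset.sum_congr rfl (fun i _ => mul_add (chiMat A i j) (v (Sum.inl i)) (v (Sum.inr j))),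
    Finset.sum_add_distrib]
  ring

lemma chiMat_nonneg (i : Fin n1) (j : Fin n2) : 0 ≤ chiMat A i j :=
  Set.indicator_nonneg (fun _ _ => zero_le_one) _

lemma sysMat_isUnit {t : ℝ} (ht : 0 < t) :
    IsUnit (sysMat A + t • (1 : Matrix (Fin n1 ⊕ Fin n2) (Fin n1 ⊕ Fin n2) ℝ)) := by
  rw [← Matrix.mulVec_injective_iff_isUnit]
  set L := sysMat A + t • (1 : Matrix (Fin n1 ⊕ Fin n2) (Fin n1 ⊕ Fin n2) ℝ) with hL
  have hker : ∀ v, L.mulVec v = 0 → v = 0 := by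
    intro v hv
    have hquad : (∑ i, ∑ j, chiMat A i j * (v (Sum.inl i) + v (Sum.inr j)) ^ 2)
        + t * ∑ k, v k ^ 2 = 0 := by
      have hform : ∑ k, v k * (L.mulVec v) k = 0 := by
        rw [hv]; simp
      rw [Fintype.sum_sum_type (fun k => v k * (L.mulVec v) k)] at hform
      have e1 : ∀ i, v (Sum.inl i) * (L.mulVec v) (Sum.inl i)
          = (∑ j, chiMat A i j * (v (Sum.inl i) + v (Sum.inr j)) * v (Sum.inl i))
            + t * v (Sum.inl i) ^ 2 := by
        intro i
        rw [sysMat_mulVec_inl, ← Finset.sum_mul]; ring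
      have e2 : ∀ j, v (Sum.inr j) * (L.mulVec v) (Sum.inr j)
          = (∑ i, chiMat A i j * (v (Sum.inl i) + v (Sum.inr j)) * v (Sum.inr j))
            + t * v (Sum.inr j) ^ 2 := by
        intro j
        rw [sysMat_mulVec_inr, ← Finset.sum_mul]; ring
      rw [Finset.sum_congr rfl (fun i _ => e1 i), Finset.sum_congr rfl (fun j _ => e2 j),
        Finset.sum_add_distrib, Finset.sum_add_distrib] at hform
      have hswap : (∑ j, ∑ i, chiMat A i j * (v (Sum.inl i) + v (Sum.inr j)) * v (Sum.inr j))
          = ∑ i, ∑ j, chiMat A i j * (v (Sum.inl i) + v (Sum.inr j)) * v (Sum.inr j) :=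
        Finset.sum_comm
      rw [hswap] at hform
      rw [Fintype.sum_sum_type (fun k => v k ^ 2), mul_add, Finset.mul_sum, Finset.mul_sum]
      have hcomb : ∀ i, ∑ j, chiMat A i j * (v (Sum.inl i) + v (Sum.inr j)) ^ 2
          = (∑ j, chiMat A i j * (v (Sum.inl i) + v (Sum.inr j)) * v (Sum.inl i))
            + ∑ j, chiMat A i j * (v (Sum.inl i) + v (Sum.inr j)) * v (Sum.inr j) := by
        intro i
        rw [← Finset.sum_add_distrib]
        exact Finset.sum_congr rfl fun j _ => by ring
      rw [Finset.sum_congr rfl (fun i _ => hcomb i), Finset.sum_add_distrib]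
      linarith [hform]
    have hq1 : 0 ≤ ∑ i, ∑ j, chiMat A i j * (v (Sum.inl i) + v (Sum.inr j)) ^ 2 :=
      Finset.sum_nonneg fun i _ => Finset.sum_nonneg fun j _ =>
        mul_nonneg (chiMat_nonneg A i j) (sq_nonneg _)
    have hq2 : 0 ≤ ∑ k, v k ^ 2 := Finset.sum_nonneg fun k _ => sq_nonneg _
    have hz : ∑ k, v k ^ 2 = 0 := by nlinarith
    funext k
    have := (Finset.sum_eq_zero_iff_of_nonneg (fun k _ => sq_nonneg (v k))).mp hz k
      (Finset.mem_univ k)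
    simpa [pow_eq_zero_iff] using this
  intro v w hvw
  have : L.mulVec (v - w) = 0 := by rw [Matrix.mulVec_sub, hvw, sub_self]
  have := hker _ this
  exact sub_eq_zero.mp this
/-- under a matching sign pattern, the dual system is the linear system. -/
lemma dual_linear {γ ε : ℝ} (c : Fin n1 → Fin n2 → ℝ)
    {μ1 β1 : Fin n1 → ℝ} {μ2 β2 : Fin n2 → ℝ}
    (hD : DualSys γ ε c μ1 μ2 β1 β2)
    (hsignP : ∀ i j, (i, j) ∈ A → 0 < β1 i + β2 j - c i j)
    (hsignN : ∀ i j, (i, j) ∉ A → β1 i + β2 j - c i j ≤ 0) :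
    ∀ k, ((sysMat A + (γ * ε) • (1 : Matrix (Fin n1 ⊕ Fin n2) (Fin n1 ⊕ Fin n2) ℝ)).mulVec
        (Sum.elim β1 β2)) k
      = γ * (Sum.elim μ1 μ2) k + Sum.elim (fun i => ∑ j, chiMat A i j * c i j)
          (fun j => ∑ i, chiMat A i j * c i j) k := by
  have hmax : ∀ i j, max (β1 i + β2 j - c i j) 0 = chiMat A i j * (β1 i + β2 j - c i j) := by
    intro i j
    by_cases h : (i, j) ∈ A
    · rw [max_eq_left (hsignP i j h).le]
      simp [chiMat, Set.indicator_of_mem h]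
    · rw [max_eq_right (hsignN i j h)]
      simp [chiMat, Set.indicator_of_notMem h]
  rintro (i | j)
  · rw [sysMat_mulVec_inl]
    have := hD.1 i
    rw [Finset.sum_congr rfl (fun j _ => hmax i j)] at this
    simp only [Sum.elim_inl, Sum.elim_inr]
    have hexp : ∀ j, chiMat A i j * (β1 i + β2 j - c i j)
        = chiMat A i j * (β1 i + β2 j) - chiMat A i j * c i j := fun j => by ring
    rw [Finset.sum_congr rfl (fun j _ => hexp j), Finset.sum_sub_distrib] at this
    linarith [this]
  · rw [sysMat_mulVec_inr]
    have := hD.2 j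
    rw [Finset.sum_congr rfl (fun i _ => hmax i j)] at this
    simp only [Sum.elim_inl, Sum.elim_inr]
    have hexp : ∀ i, chiMat A i j * (β1 i + β2 j - c i j)
        = chiMat A i j * (β1 i + β2 j) - chiMat A i j * c i j := fun i => by ring
    rw [Finset.sum_congr rfl (fun i _ => hexp i), Finset.sum_sub_distrib] at this
    linarith [this]


/-- At a point where Ω_0(μ) = ∅, the matrix N(Ω_+(μ)) + γεI is invertible and the Fréchet
derivative of S_{γ,ε} at μ is h ↦ M(Ω_+(μ))(η1 ⊕ η2) where (η1, η2) = (N(Ω_+(μ)) + γεI)⁻¹ h. -/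
theorem Smap_derivative_formula (n1 n2 : ℕ) (hn1 : 0 < n1) (hn2 : 0 < n2)
    (γ ε : ℝ) (hγ : 0 < γ) (hε : 0 < ε) (c : Fin n1 → Fin n2 → ℝ)
    (F : (Fin n1 → ℝ) × (Fin n2 → ℝ) → (Fin n1 → ℝ) × (Fin n2 → ℝ))
    (hF : ∀ μ : (Fin n1 → ℝ) × (Fin n2 → ℝ), DualSys γ ε c μ.1 μ.2 (F μ).1 (F μ).2)
    (μ : (Fin n1 → ℝ) × (Fin n2 → ℝ))
    (hΩ0 : ∀ i j, (F μ).1 i + (F μ).2 j - c i j ≠ 0) :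
    IsUnit (sysMat (omegaPlus c F μ) + (γ * ε) • (1 : Matrix (Fin n1 ⊕ Fin n2) (Fin n1 ⊕ Fin n2) ℝ)) ∧
    DifferentiableAt ℝ (Smap γ c F) μ ∧
    ∀ h : (Fin n1 → ℝ) × (Fin n2 → ℝ), ∀ i j,
      fderiv ℝ (Smap γ c F) μ h i j =
        chiMat (omegaPlus c F μ) i j *
          (((sysMat (omegaPlus c F μ) +
              (γ * ε) • (1 : Matrix (Fin n1 ⊕ Fin n2) (Fin n1 ⊕ Fin n2) ℝ))⁻¹).mulVec
              (Sum.elim h.1 h.2) (Sum.inl i) +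
            ((sysMat (omegaPlus c F μ) +
              (γ * ε) • (1 : Matrix (Fin n1 ⊕ Fin n2) (Fin n1 ⊕ Fin n2) ℝ))⁻¹).mulVec
              (Sum.elim h.1 h.2) (Sum.inr j)) := by
  set A := omegaPlus c F μ with hAdef
  set L := sysMat A + (γ * ε) • (1 : Matrix (Fin n1 ⊕ Fin n2) (Fin n1 ⊕ Fin n2) ℝ) with hLdef
  have hγε : 0 < γ * ε := mul_pos hγ hε
  have hUnit : IsUnit L := sysMat_isUnit A hγε
  have hLinv : L⁻¹ * L = 1 := Matrix.nonsing_inv_mul L ((Matrix.isUnit_iff_isUnit_det L).mp hUnit)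
  -- sign pattern at μ
  have hsP : ∀ i j, (i, j) ∈ A → 0 < (F μ).1 i + (F μ).2 j - c i j := fun i j h => h
  have hsN : ∀ i j, (i, j) ∉ A → (F μ).1 i + (F μ).2 j - c i j < 0 := fun i j h =>
    lt_of_le_of_ne (not_lt.mp h) (hΩ0 i j)
  -- the gap δ
  have hne : Nonempty (Fin n1 × Fin n2) := ⟨⟨⟨0, hn1⟩, ⟨0, hn2⟩⟩⟩
  set δ := Finset.univ.inf' Finset.univ_nonempty
    (fun p : Fin n1 × Fin n2 => |(F μ).1 p.1 + (F μ).2 p.2 - c p.1 p.2|) with hδdef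
  have hδpos : 0 < δ := by
    rw [hδdef, Finset.lt_inf'_iff]
    exact fun p _ => abs_pos.mpr (hΩ0 p.1 p.2)
  have hδle : ∀ i j, δ ≤ |(F μ).1 i + (F μ).2 j - c i j| := fun i j =>
    Finset.inf'_le _ (Finset.mem_univ (i, j))
  set NN : ℝ := (n1 : ℝ) + (n2 : ℝ) with hNNdef
  have hNN0 : 0 ≤ NN := by positivity
  set r := ε * δ / (4 * (NN + 1)) with hrdef
  have hrpos : 0 < r := by rw [hrdef]; positivity
  -- Lipschitz bound on the ball
  have hball : ∀ μ' : (Fin n1 → ℝ) × (Fin n2 → ℝ), dist μ' μ < r →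
      (∀ i, |(F μ).1 i - (F μ').1 i| ≤ NN * dist μ' μ / ε) ∧
      (∀ j, |(F μ).2 j - (F μ').2 j| ≤ NN * dist μ' μ / ε) := by
    intro μ' hμ'
    have hK1 : ∀ i, |μ.1 i - μ'.1 i| ≤ dist μ' μ := by
      intro i; rw [← Real.dist_eq, dist_comm]
      exact le_trans (dist_le_pi_dist μ'.1 μ.1 i)
        (le_trans (le_max_left _ _) (le_of_eq (Prod.dist_eq).symm))
    have hK2 : ∀ j, |μ.2 j - μ'.2 j| ≤ dist μ' μ := by
      intro j; rw [← Real.dist_eq, dist_comm]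
      exact le_trans (dist_le_pi_dist μ'.2 μ.2 j)
        (le_trans (le_max_right _ _) (le_of_eq (Prod.dist_eq).symm))
    have := lipschitz_bound hn1 hγ hε c (hF μ) (hF μ') hK1 hK2
    rw [hNNdef]
    exact this
  -- sign pattern at nearby points
  have hsign' : ∀ μ' : (Fin n1 → ℝ) × (Fin n2 → ℝ), dist μ' μ < r →
      (∀ i j, (i, j) ∈ A → 0 < (F μ').1 i + (F μ').2 j - c i j) ∧
      (∀ i j, (i, j) ∉ A → (F μ').1 i + (F μ').2 j - c i j ≤ 0) := by
    intro μ' hμ'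
    have hdist0 : 0 ≤ dist μ' μ := dist_nonneg
    have hb := hball μ' hμ'
    have hdiff : ∀ i j, |((F μ').1 i + (F μ').2 j - c i j) - ((F μ).1 i + (F μ).2 j - c i j)| < δ := by
      intro i j
      have h1 := hb.1 i
      have h2 := hb.2 j
      have habs : |((F μ').1 i + (F μ').2 j - c i j) - ((F μ).1 i + (F μ).2 j - c i j)|
          ≤ |(F μ).1 i - (F μ').1 i| + |(F μ).2 j - (F μ').2 j| := by
        have : ((F μ').1 i + (F μ').2 j - c i j) - ((F μ).1 i + (F μ).2 j - c i j)
            = -(((F μ).1 i - (F μ').1 i) + ((F μ).2 j - (F μ').2 j)) := by ring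
        rw [this, abs_neg]
        exact abs_add_le _ _
      have hmono : NN * dist μ' μ / ε ≤ NN * r / ε := by
        gcongr
      have hcalc : NN * r / ε = NN * δ / (4 * (NN + 1)) := by
        rw [hrdef]; field_simp
      have hkey : 2 * (NN * r / ε) < δ := by
        rw [hcalc, show (2:ℝ) * (NN * δ / (4 * (NN + 1))) = 2 * (NN * δ) / (4 * (NN + 1)) from by
          ring, div_lt_iff₀ (by positivity : (0:ℝ) < 4 * (NN + 1))]
        nlinarith [hδpos, hNN0]
      linarith [habs, h1, h2, hmono, hkey]
    constructor
    · intro i j hmem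
      have hx := hsP i j hmem
      have hd := abs_lt.mp (hdiff i j)
      have : δ ≤ (F μ).1 i + (F μ).2 j - c i j := le_trans (hδle i j)
        (le_of_eq (abs_of_pos hx))
      linarith [hd.1, this]
    · intro i j hmem
      have hx := hsN i j hmem
      have hd := abs_lt.mp (hdiff i j)
      have : δ ≤ -((F μ).1 i + (F μ).2 j - c i j) := le_trans (hδle i j)
        (le_of_eq (abs_of_neg hx))
      linarith [hd.2, this]
  -- linear system on the ball
  set b : Fin n1 ⊕ Fin n2 → ℝ := Sum.elim (fun i => ∑ j, chiMat A i j * c i j)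
    (fun j => ∑ i, chiMat A i j * c i j) with hbdef
  have hlin : ∀ μ' : (Fin n1 → ℝ) × (Fin n2 → ℝ), dist μ' μ < r →
      ∀ k, (L.mulVec (Sum.elim (F μ').1 (F μ').2)) k = γ * (Sum.elim μ'.1 μ'.2) k + b k := by
    intro μ' h k
    have := dual_linear A c (hF μ') (hsign' μ' h).1 (hsign' μ' h).2 k
    rw [hLdef, hbdef]
    exact this
  have hself : dist μ μ < r := by rw [dist_self]; exact hrpos
  -- difference formula
  have helim : ∀ μ' : (Fin n1 → ℝ) × (Fin n2 → ℝ),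
      Sum.elim (F μ').1 (F μ').2 - Sum.elim (F μ).1 (F μ).2
        = Sum.elim ((F μ').1 - (F μ).1) ((F μ').2 - (F μ).2) := by
    intro μ'; funext k; cases k <;> simp
  have hdiffvec : ∀ μ' : (Fin n1 → ℝ) × (Fin n2 → ℝ), dist μ' μ < r →
      Sum.elim (F μ').1 (F μ').2 - Sum.elim (F μ).1 (F μ).2
        = γ • L⁻¹.mulVec (Sum.elim (μ'.1 - μ.1) (μ'.2 - μ.2)) := by
    intro μ' h
    have hsub : L.mulVec (Sum.elim (F μ').1 (F μ').2 - Sum.elim (F μ).1 (F μ).2)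
        = γ • Sum.elim (μ'.1 - μ.1) (μ'.2 - μ.2) := by
      rw [Matrix.mulVec_sub]
      funext k
      have h1 := hlin μ' h k
      have h2 := hlin μ hself k
      have helim2 : (Sum.elim (μ'.1 - μ.1) (μ'.2 - μ.2)) k
          = Sum.elim μ'.1 μ'.2 k - Sum.elim μ.1 μ.2 k := by cases k <;> simp
      simp only [Pi.sub_apply, Pi.smul_apply, smul_eq_mul, h1, h2, helim2]
      ring
    calc Sum.elim (F μ').1 (F μ').2 - Sum.elim (F μ).1 (F μ).2
        = (L⁻¹ * L).mulVec (Sum.elim (F μ').1 (F μ').2 - Sum.elim (F μ).1 (F μ).2) := by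
          rw [hLinv, Matrix.one_mulVec]
      _ = L⁻¹.mulVec (L.mulVec (Sum.elim (F μ').1 (F μ').2 - Sum.elim (F μ).1 (F μ).2)) :=
          (Matrix.mulVec_mulVec _ _ _).symm
      _ = γ • L⁻¹.mulVec (Sum.elim (μ'.1 - μ.1) (μ'.2 - μ.2)) := by
          rw [hsub, Matrix.mulVec_smul]
  -- the candidate derivative
  set Dlin : ((Fin n1 → ℝ) × (Fin n2 → ℝ)) →ₗ[ℝ] (Fin n1 → Fin n2 → ℝ) :=
    { toFun := fun h => fun i j => chiMat A i j *
        ((L⁻¹.mulVec (Sum.elim h.1 h.2)) (Sum.inl i) + (L⁻¹.mulVec (Sum.elim h.1 h.2)) (Sum.inr j)),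
      map_add' := by
        intro h h'
        have he : Sum.elim (h + h').1 (h + h').2 = Sum.elim h.1 h.2 + Sum.elim h'.1 h'.2 := by
          funext k; cases k <;> simp
        funext i j
        simp only [he, Matrix.mulVec_add, Pi.add_apply]
        ring
      map_smul' := by
        intro a h
        have he : Sum.elim (a • h).1 (a • h).2 = a • Sum.elim h.1 h.2 := by
          funext k; cases k <;> simp
        funext i j
        simp only [he, Matrix.mulVec_smul, Pi.smul_apply, smul_eq_mul, RingHom.id_apply]
        ring } with hDlindef
  set D : ((Fin n1 → ℝ) × (Fin n2 → ℝ)) →L[ℝ] (Fin n1 → Fin n2 → ℝ) :=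
    LinearMap.toContinuousLinearMap Dlin with hDdef
  have hDapp : ∀ h : (Fin n1 → ℝ) × (Fin n2 → ℝ), ∀ i j, D h i j = chiMat A i j *
      ((L⁻¹.mulVec (Sum.elim h.1 h.2)) (Sum.inl i) + (L⁻¹.mulVec (Sum.elim h.1 h.2)) (Sum.inr j)) := by
    intro h i j
    rw [hDdef]
    rfl
  -- Smap is locally affine
  have hSg : ∀ μ' : (Fin n1 → ℝ) × (Fin n2 → ℝ), dist μ' μ < r →
      Smap γ c F μ' = (Smap γ c F μ - D μ) + D μ' := by
    intro μ' h
    funext i j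
    have hvv := congrFun (hdiffvec μ' h)
    set w := L⁻¹.mulVec (Sum.elim (μ'.1 - μ.1) (μ'.2 - μ.2)) with hwdef
    have hv1 : (F μ').1 i - (F μ).1 i = γ * w (Sum.inl i) := by
      have := hvv (Sum.inl i)
      simpa using this
    have hv2 : (F μ').2 j - (F μ).2 j = γ * w (Sum.inr j) := by
      have := hvv (Sum.inr j)
      simpa using this
    have hDdiff : D μ' i j - D μ i j = chiMat A i j * (w (Sum.inl i) + w (Sum.inr j)) := by
      rw [hDapp, hDapp]
      have hsube : Sum.elim μ'.1 μ'.2 - Sum.elim μ.1 μ.2 = Sum.elim (μ'.1 - μ.1) (μ'.2 - μ.2) := by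
        funext k; cases k <;> simp
      have : L⁻¹.mulVec (Sum.elim (μ'.1 - μ.1) (μ'.2 - μ.2))
          = L⁻¹.mulVec (Sum.elim μ'.1 μ'.2) - L⁻¹.mulVec (Sum.elim μ.1 μ.2) := by
        rw [← Matrix.mulVec_sub, hsube]
      rw [hwdef, this]
      simp only [Pi.sub_apply]
      ring
    simp only [Pi.add_apply, Pi.sub_apply, Smap]
    by_cases hmem : (i, j) ∈ A
    · have hχ : chiMat A i j = 1 := by simp [chiMat, Set.indicator_of_mem hmem]
      have hx : 0 < (F μ).1 i + (F μ).2 j - c i j := hsP i j hmem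
      have hy : 0 < (F μ').1 i + (F μ').2 j - c i j := (hsign' μ' h).1 i j hmem
      rw [max_eq_left hx.le, max_eq_left hy.le]
      rw [hχ, one_mul] at hDdiff
      have hγ0 : γ ≠ 0 := hγ.ne'
      have hsum : (F μ').1 i + (F μ').2 j - c i j
          = ((F μ).1 i + (F μ).2 j - c i j) + γ * (w (Sum.inl i) + w (Sum.inr j)) := by
        have e1 : (F μ').1 i = (F μ).1 i + γ * w (Sum.inl i) := by linarith [hv1]
        have e2 : (F μ').2 j = (F μ).2 j + γ * w (Sum.inr j) := by linarith [hv2]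
        rw [e1, e2]; ring
      rw [hsum, mul_add, ← mul_assoc, one_div_mul_cancel hγ0, one_mul]
      linarith [hDdiff]
    · have hχ : chiMat A i j = 0 := by simp [chiMat, Set.indicator_of_notMem hmem]
      have hx : (F μ).1 i + (F μ).2 j - c i j < 0 := hsN i j hmem
      have hy : (F μ').1 i + (F μ').2 j - c i j ≤ 0 := (hsign' μ' h).2 i j hmem
      rw [max_eq_right hx.le, max_eq_right hy]
      rw [hχ, zero_mul] at hDdiff
      linarith [hDdiff]
  -- conclude
  have hDer : HasFDerivAt (Smap γ c F) D μ := by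
    have hg : HasFDerivAt (fun x => (Smap γ c F μ - D μ) + D x) D μ :=
      D.hasFDerivAt.const_add _
    refine hg.congr_of_eventuallyEq ?_
    filter_upwards [Metric.ball_mem_nhds μ hrpos] with μ' hμ'
    exact hSg μ' (by rwa [Metric.mem_ball] at hμ')
  refine ⟨hUnit, hDer.differentiableAt, ?_⟩
  intro h i j
  rw [hDer.fderiv]
  exact hDapp h i j
end
end

section
/- Let n1, n2 be positive integers, let γ > 0 and ε > 0, and let c ∈ ℝ^{n1×n2}. Let μ = (μ1, μ2) ∈ ℝ^{n1} × ℝ^{n2} be a point with Ω_0(μ) ≠ ∅ (so that S_{γ,ε} is not differentiable at μ). Then a linear map G : ℝ^{n1} × ℝ^{n2} → ℝ^{n1×n2} is a Bouligand subgradient of S_{γ,ε} at μ — meaning that there exists a sequence (μ_k)_{k∈ℕ} with μ_k → μ, S_{γ,ε} Fréchet differentiable at every μ_k, and the Fréchet derivatives of S_{γ,ε} at μ_k converging to G — if and only if there exists an index set A ⊆ Ω_0(μ) having an outer structure w.r.t. Ω_0(μ) such that G is the map h ↦ M(Ω_+(μ) ∪ A)(η1 ⊕ η2) with (η1, η2)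 := (N(Ω_+(μ) ∪ A) + γ ε I)^{-1} h. -/
open Filter Topology

noncomputable section

/-- The set Ω_0(μ) of vanishing indices. -/
def omegaZero {n1 n2 : ℕ} (c : Fin n1 → Fin n2 → ℝ)
    (F : (Fin n1 → ℝ) × (Fin n2 → ℝ) → (Fin n1 → ℝ) × (Fin n2 → ℝ))
    (μ : (Fin n1 → ℝ) × (Fin n2 → ℝ)) : Set (Fin n1 × Fin n2) :=
  {p | (F μ).1 p.1 + (F μ).2 p.2 - c p.1 p.2 = 0}

/-- A ⊆ B has an outer structure w.r.t. B. -/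
def HasOuterStructure {n1 n2 : ℕ} (A B : Set (Fin n1 × Fin n2)) : Prop :=
  ∃ (v1 : Fin n1 → ℝ) (v2 : Fin n2 → ℝ),
    (∀ p ∈ A, 0 < v1 p.1 + v2 p.2) ∧ (∀ p ∈ B \ A, v1 p.1 + v2 p.2 < 0)

/-!
Write `Φ β := γ⁻¹ (Σ (β₁ ⊕ β₂ - c)₊ + γ ε β)` (`dualSysRhs`) for the data solved by the dual
variables `β`, so that `F` inverts `Φ`; strong monotonicity of `Φ` makes `F` Lipschitz. On dual
variables sharing an active set `B` (containing every positive entry of `β₁ ⊕ β₂ - c` and no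
negative one) `Φ` is affine with linear part `γ⁻¹ (N(B) + γ ε I)`, hence `S_{γ,ε}` is affine on the
corresponding data, with derivative `h ↦ M(B)(η₁ ⊕ η₂)`, `η = (N(B) + γ ε I)⁻¹ h`.

If `Ω₀(μ) = ∅`, the active set `Ω₊(μ)` persists near `μ` and `S_{γ,ε}` is differentiable at `μ`.
At an index of `Ω₀(μ)` the one-sided derivatives along a direction that activates it and along one
that deactivates it differ, so `S_{γ,ε}` is not differentiable there. A Bouligand subgradient is
thus the derivative for an active set `Ω₊(μ) ∪ A` realised arbitrarily close to `μ`, and the sign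
of the outer sum of `F μₖ - F μ` on `Ω₀(μ)` exhibits `A` as an outer structure. Conversely, moving
the dual variables along an outer structure realises `Ω₊(μ) ∪ A`.
-/

section Analysis

variable {E F : Type*} [NormedAddCommGroup E] [NormedSpace ℝ E] [NormedAddCommGroup F]
  [NormedSpace ℝ F]

theorem HasFDerivAt.apply_eq_of_eventually_eq_add_smul {f : E → F} {f' : E →L[ℝ] F}
    {x v : E} {b : F} (hf : HasFDerivAt f f' x)
    (h : ∀ᶠ t in 𝓝[>] (0 : ℝ), f (x + t • v) = f x + t • b) : f' v = b := by
  have hray : HasDerivAt (fun t : ℝ => f (x + t • v)) (f' v) 0 := by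
    have hline : HasDerivAt (fun t : ℝ => x + t • v) v 0 := by
      simpa using ((hasDerivAt_id (0 : ℝ)).smul_const v).const_add x
    exact (by simpa using hf : HasFDerivAt f f' (x + (0 : ℝ) • v)).comp_hasDerivAt 0 hline
  have haff : HasDerivWithinAt (fun t : ℝ => f x + t • b) b (Set.Ioi 0) 0 := by
    simpa using (((hasDerivAt_id (0 : ℝ)).smul_const b).const_add (f x)).hasDerivWithinAt
  exact (uniqueDiffWithinAt_Ioi 0).eq_deriv _ hray.hasDerivWithinAt
    (haff.congr_of_eventuallyEq h (by simp))

theorem ContinuousLinearMap.eq_zero_of_eventually_eq_zero {L : E →L[ℝ] F} {x : E}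
    (h : ∀ᶠ v in 𝓝 x, L v = 0) : L = 0 :=
  L.hasFDerivAt.unique ((hasFDerivAt_const 0 x).congr_of_eventuallyEq h)

theorem Filter.Tendsto.eventually_pos_and_neg {X ι : Type*} [Finite ι] {l : Filter X}
    {g : X → ι → ℝ} {y : ι → ℝ} (h : Tendsto g l (𝓝 y)) :
    ∀ᶠ x in l, ∀ p, (0 < y p → 0 < g x p) ∧ (y p < 0 → g x p < 0) := by
  refine eventually_all.2 fun p => ?_
  have hp := tendsto_pi_nhds.1 h p
  rcases lt_trichotomy (y p) 0 with hneg | hzero | hpos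
  · filter_upwards [hp.eventually_lt_const hneg] with x hx
      using ⟨fun h => absurd h hneg.not_gt, fun _ => hx⟩
  · exact Eventually.of_forall fun _ => ⟨fun h => absurd hzero h.ne', fun h => absurd hzero h.ne⟩
  · filter_upwards [hp.eventually_const_lt hpos] with x hx
      using ⟨fun _ => hx, fun h => absurd hpos h.not_gt⟩

end Analysis

namespace RegOT

open Matrix

abbrev PairVec (n1 n2 : ℕ) := (Fin n1 → ℝ) × (Fin n2 → ℝ)

variable {n1 n2 : ℕ}

def stack : PairVec n1 n2 ≃ₗ[ℝ] (Fin n1 ⊕ Fin n2 → ℝ) :=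
  (LinearEquiv.sumArrowLequivProdArrow _ _ ℝ ℝ).symm

@[simp] lemma stack_inl (x : PairVec n1 n2) (i : Fin n1) : stack x (Sum.inl i) = x.1 i := rfl

@[simp] lemma stack_inr (x : PairVec n1 n2) (j : Fin n2) : stack x (Sum.inr j) = x.2 j := rfl

lemma dotProduct_stack (x y : PairVec n1 n2) :
    stack x ⬝ᵥ stack y = ∑ i, x.1 i * y.1 i + ∑ j, x.2 j * y.2 j := by
  simp [dotProduct, Fintype.sum_sum_type]

lemma norm_le_sqrt_dotProduct_stack (x : PairVec n1 n2) : ‖x‖ ≤ √(stack x ⬝ᵥ stack x) := by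
  have hcoord : ∀ q, |stack x q| ≤ √(stack x ⬝ᵥ stack x) := fun q =>
    Real.abs_le_sqrt <| by
      simpa [dotProduct, sq] using Finset.single_le_sum (f := fun q => stack x q * stack x q)
        (fun q _ => mul_self_nonneg _) (Finset.mem_univ q)
  refine max_le ((pi_norm_le_iff_of_nonneg (Real.sqrt_nonneg _)).2 fun i => ?_)
    ((pi_norm_le_iff_of_nonneg (Real.sqrt_nonneg _)).2 fun j => ?_)
  · simpa using hcoord (Sum.inl i)
  · simpa using hcoord (Sum.inr j)

lemma continuous_stack : Continuous (stack : PairVec n1 n2 → _) :=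
  LinearMap.continuous_of_finiteDimensional stack.toLinearMap

variable (c : Fin n1 → Fin n2 → ℝ)

def slack (β : PairVec n1 n2) (p : Fin n1 × Fin n2) : ℝ := β.1 p.1 + β.2 p.2 - c p.1 p.2

lemma continuous_slack : Continuous (slack c : PairVec n1 n2 → _) := by
  unfold slack; fun_prop

lemma slack_sub_slack (α β : PairVec n1 n2) (p : Fin n1 × Fin n2) :
    slack c α p - slack c β p = (α - β).1 p.1 + (α - β).2 p.2 := by
  simp only [slack, Prod.fst_sub, Prod.snd_sub, Pi.sub_apply]; ring

lemma slack_add_smul (α v : PairVec n1 n2) (t : ℝ) (p : Fin n1 × Fin n2) :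
    slack c (α + t • v) p = slack c α p + t * (v.1 p.1 + v.2 p.2) := by
  simp only [slack, Prod.fst_add, Prod.snd_add, Prod.smul_fst, Prod.smul_snd, Pi.add_apply,
    Pi.smul_apply, smul_eq_mul]; ring

lemma eventually_slack_add_smul (α v : PairVec n1 n2) :
    ∀ᶠ t in 𝓝[>] (0 : ℝ), 0 < t ∧ ∀ p, (0 < slack c α p → 0 < slack c (α + t • v) p) ∧
      (slack c α p < 0 → slack c (α + t • v) p < 0) := by
  have hline : Continuous fun t : ℝ => slack c (α + t • v) :=
    (continuous_slack c).comp (by fun_prop)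
  exact (eventually_mem_nhdsWithin (a := (0 : ℝ)) (s := Set.Ioi 0)).and
    ((by simpa using (hline.tendsto 0).mono_left nhdsWithin_le_nhds :
      Tendsto (fun t : ℝ => slack c (α + t • v)) (𝓝[>] 0) (𝓝 (slack c α))).eventually_pos_and_neg)

def planMarg (β : PairVec n1 n2) : PairVec n1 n2 :=
  (fun i => ∑ j, max (slack c β (i, j)) 0, fun j => ∑ i, max (slack c β (i, j)) 0)

lemma max_sub_max_mul_sub_nonneg (a b : ℝ) : 0 ≤ (max a 0 - max b 0) * (a - b) := by
  rcases le_total a b with h | h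
  · exact mul_nonneg_of_nonpos_of_nonpos (sub_nonpos.2 (max_le_max h le_rfl)) (sub_nonpos.2 h)
  · exact mul_nonneg (sub_nonneg.2 (max_le_max h le_rfl)) (sub_nonneg.2 h)

lemma dotProduct_planMarg_sub_nonneg (α β : PairVec n1 n2) :
    0 ≤ stack (planMarg c α - planMarg c β) ⬝ᵥ stack (α - β) := by
  have hsum : stack (planMarg c α - planMarg c β) ⬝ᵥ stack (α - β) =
      ∑ i, ∑ j, (max (slack c α (i, j)) 0 - max (slack c β (i, j)) 0) *
        (slack c α (i, j) - slack c β (i, j)) := by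
    simp only [dotProduct_stack, slack_sub_slack, planMarg, Prod.fst_sub, Prod.snd_sub,
      Pi.sub_apply, ← Finset.sum_sub_distrib, Finset.sum_mul, mul_add, Finset.sum_add_distrib]
    rw [Finset.sum_comm (s := Finset.univ (α := Fin n2))]
  rw [hsum]
  exact Finset.sum_nonneg fun i _ => Finset.sum_nonneg fun j _ => max_sub_max_mul_sub_nonneg _ _

variable (γ ε : ℝ)

def dualSysRhs (β : PairVec n1 n2) : PairVec n1 n2 := γ⁻¹ • (planMarg c β + (γ * ε) • β)

lemma continuous_dualSysRhs : Continuous (dualSysRhs c γ ε : PairVec n1 n2 → _) := by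
  unfold dualSysRhs planMarg slack; fun_prop

variable {c γ ε}

lemma dualSys_iff {μ α : PairVec n1 n2} :
    DualSys γ ε c μ.1 μ.2 α.1 α.2 ↔ planMarg c α + (γ * ε) • α = γ • μ := by
  simp [DualSys, Prod.ext_iff, funext_iff, planMarg, slack, mul_assoc]

lemma dualSys_iff_eq_dualSysRhs (hγ : γ ≠ 0) {μ α : PairVec n1 n2} :
    DualSys γ ε c μ.1 μ.2 α.1 α.2 ↔ μ = dualSysRhs c γ ε α := by
  rw [dualSys_iff, dualSysRhs, eq_inv_smul_iff₀ hγ, eq_comm]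

lemma sq_mul_dotProduct_le_of_dualSys (hγ : 0 < γ) (hε : 0 < ε) {μ ν α β : PairVec n1 n2}
    (hα : DualSys γ ε c μ.1 μ.2 α.1 α.2) (hβ : DualSys γ ε c ν.1 ν.2 β.1 β.2) :
    ε ^ 2 * (stack (α - β) ⬝ᵥ stack (α - β)) ≤ stack (μ - ν) ⬝ᵥ stack (μ - ν) := by
  set x := stack (μ - ν)
  set y := stack (α - β)
  have hdiff : planMarg c α - planMarg c β = γ • (μ - ν) - (γ * ε) • (α - β) := by
    rw [smul_sub, smul_sub, ← (dualSys_iff.1 hα), ← (dualSys_iff.1 hβ)]; abel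
  have hmono : ε * (y ⬝ᵥ y) ≤ x ⬝ᵥ y := by
    have := dotProduct_planMarg_sub_nonneg c α β
    rw [hdiff, map_sub, map_smul, map_smul, sub_dotProduct, smul_dotProduct, smul_dotProduct,
      smul_eq_mul, smul_eq_mul] at this
    nlinarith
  have hsq : 0 ≤ (x - ε • y) ⬝ᵥ (x - ε • y) := by
    simpa [dotProduct, sq] using Finset.sum_nonneg fun q (_ : q ∈ Finset.univ) =>
      mul_self_nonneg ((x - ε • y) q)
  simp only [sub_dotProduct, dotProduct_sub, smul_dotProduct, dotProduct_smul, smul_eq_mul,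
    dotProduct_comm y x] at hsq
  nlinarith

lemma mul_norm_sub_le_of_dualSys (hγ : 0 < γ) (hε : 0 < ε) {μ ν α β : PairVec n1 n2}
    (hα : DualSys γ ε c μ.1 μ.2 α.1 α.2) (hβ : DualSys γ ε c ν.1 ν.2 β.1 β.2) :
    ε * ‖α - β‖ ≤ √(stack (μ - ν) ⬝ᵥ stack (μ - ν)) :=
  calc ε * ‖α - β‖ ≤ ε * √(stack (α - β) ⬝ᵥ stack (α - β)) :=
        mul_le_mul_of_nonneg_left (norm_le_sqrt_dotProduct_stack _) hε.le
    _ = √(ε ^ 2 * (stack (α - β) ⬝ᵥ stack (α - β))) := by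
        rw [Real.sqrt_mul (sq_nonneg ε), Real.sqrt_sq hε.le]
    _ ≤ _ := Real.sqrt_le_sqrt (sq_mul_dotProduct_le_of_dualSys hγ hε hα hβ)

lemma eq_of_dualSys (hγ : 0 < γ) (hε : 0 < ε) {μ α β : PairVec n1 n2}
    (hα : DualSys γ ε c μ.1 μ.2 α.1 α.2) (hβ : DualSys γ ε c μ.1 μ.2 β.1 β.2) : α = β := by
  have := mul_norm_sub_le_of_dualSys hγ hε hα hβ
  rw [sub_self, map_zero, dotProduct_zero, Real.sqrt_zero] at this
  exact sub_eq_zero.1 (norm_le_zero_iff.1 (nonpos_of_mul_nonpos_right this hε))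

variable {F : PairVec n1 n2 → PairVec n1 n2}

lemma dualSysRhs_solution (hγ : 0 < γ)
    (hF : ∀ μ : (Fin n1 → ℝ) × (Fin n2 → ℝ), DualSys γ ε c μ.1 μ.2 (F μ).1 (F μ).2)
    (μ : PairVec n1 n2) : dualSysRhs c γ ε (F μ) = μ :=
  ((dualSys_iff_eq_dualSysRhs hγ.ne').1 (hF μ)).symm

lemma solution_dualSysRhs (hγ : 0 < γ) (hε : 0 < ε)
    (hF : ∀ μ : (Fin n1 → ℝ) × (Fin n2 → ℝ), DualSys γ ε c μ.1 μ.2 (F μ).1 (F μ).2)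
    (β : PairVec n1 n2) : F (dualSysRhs c γ ε β) = β :=
  eq_of_dualSys hγ hε (hF _) ((dualSys_iff_eq_dualSysRhs hγ.ne').2 rfl)

lemma continuous_solution (hγ : 0 < γ) (hε : 0 < ε)
    (hF : ∀ μ : (Fin n1 → ℝ) × (Fin n2 → ℝ), DualSys γ ε c μ.1 μ.2 (F μ).1 (F μ).2) :
    Continuous F := by
  refine continuous_iff_continuousAt.2 fun ν => tendsto_iff_norm_sub_tendsto_zero.2 ?_
  set bound := fun μ : PairVec n1 n2 => √(stack (μ - ν) ⬝ᵥ stack (μ - ν)) / ε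
  have hbound : Tendsto bound (𝓝 ν) (𝓝 0) := by
    have := continuous_stack (n1 := n1) (n2 := n2)
    simpa [bound] using (show Continuous bound by fun_prop).tendsto ν
  refine squeeze_zero (fun _ => norm_nonneg _) (fun μ => ?_) hbound
  rw [le_div_iff₀' hε]
  exact mul_norm_sub_le_of_dualSys hγ hε (hF μ) (hF ν)

lemma chiMat_mem {A : Set (Fin n1 × Fin n2)} {i : Fin n1} {j : Fin n2} (h : (i, j) ∈ A) :
    chiMat A i j = 1 :=
  Set.indicator_of_mem h _

lemma chiMat_notMem {A : Set (Fin n1 × Fin n2)} {i : Fin n1} {j : Fin n2} (h : (i, j) ∉ A) :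
    chiMat A i j = 0 :=
  Set.indicator_of_notMem h _

lemma chiMat_nonneg (A : Set (Fin n1 × Fin n2)) (i : Fin n1) (j : Fin n2) : 0 ≤ chiMat A i j :=
  Set.indicator_nonneg (fun _ _ => zero_le_one) _

lemma sysMat_mulVec_inl (A : Set (Fin n1 × Fin n2)) (x : Fin n1 ⊕ Fin n2 → ℝ) (i : Fin n1) :
    (sysMat A *ᵥ x) (Sum.inl i) = ∑ j, chiMat A i j * (x (Sum.inl i) + x (Sum.inr j)) := by
  simp [sysMat, Matrix.mulVec, dotProduct, Fintype.sum_sum_type, mul_add, Finset.sum_add_distrib,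
    Finset.sum_mul]

lemma sysMat_mulVec_inr (A : Set (Fin n1 × Fin n2)) (x : Fin n1 ⊕ Fin n2 → ℝ) (j : Fin n2) :
    (sysMat A *ᵥ x) (Sum.inr j) = ∑ i, chiMat A i j * (x (Sum.inl i) + x (Sum.inr j)) := by
  simp [sysMat, Matrix.mulVec, dotProduct, Fintype.sum_sum_type, mul_add, Finset.sum_add_distrib,
    Finset.sum_mul]

lemma sysMat_isHermitian (A : Set (Fin n1 × Fin n2)) : (sysMat A).IsHermitian := by
  ext (i | j) (i' | j') <;> simp only [Matrix.conjTranspose_apply, sysMat, Matrix.of_apply,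
    star_trivial] <;> split_ifs <;> simp_all

lemma dotProduct_sysMat_mulVec (A : Set (Fin n1 × Fin n2)) (x : Fin n1 ⊕ Fin n2 → ℝ) :
    x ⬝ᵥ (sysMat A *ᵥ x) = ∑ i, ∑ j, chiMat A i j * (x (Sum.inl i) + x (Sum.inr j)) ^ 2 := by
  simp only [dotProduct, Fintype.sum_sum_type, sysMat_mulVec_inl, sysMat_mulVec_inr,
    Finset.mul_sum]
  rw [Finset.sum_comm (s := Finset.univ (α := Fin n2)), ← Finset.sum_add_distrib]
  refine Finset.sum_congr rfl fun i _ => ?_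
  rw [← Finset.sum_add_distrib]
  exact Finset.sum_congr rfl fun j _ => by ring

lemma sysMat_posSemidef (A : Set (Fin n1 × Fin n2)) : (sysMat A).PosSemidef :=
  Matrix.posSemidef_iff_dotProduct_mulVec.2 ⟨sysMat_isHermitian A, fun x => by
    rw [star_trivial, dotProduct_sysMat_mulVec]
    exact Finset.sum_nonneg fun i _ => Finset.sum_nonneg fun j _ =>
      mul_nonneg (chiMat_nonneg A i j) (sq_nonneg _)⟩

def regSysMat (γ ε : ℝ) (A : Set (Fin n1 × Fin n2)) :
    Matrix (Fin n1 ⊕ Fin n2) (Fin n1 ⊕ Fin n2) ℝ :=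
  sysMat A + (γ * ε) • (1 : Matrix (Fin n1 ⊕ Fin n2) (Fin n1 ⊕ Fin n2) ℝ)

lemma regSysMat_posDef (hγ : 0 < γ) (hε : 0 < ε) (A : Set (Fin n1 × Fin n2)) :
    (regSysMat γ ε A).PosDef := by
  rw [regSysMat, add_comm]
  exact (Matrix.PosDef.one.smul (mul_pos hγ hε)).add_posSemidef (sysMat_posSemidef A)

lemma regSysMat_mulVec_inv_mulVec (hγ : 0 < γ) (hε : 0 < ε) (A : Set (Fin n1 × Fin n2))
    (x : Fin n1 ⊕ Fin n2 → ℝ) : regSysMat γ ε A *ᵥ ((regSysMat γ ε A)⁻¹ *ᵥ x) = x := by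
  rw [Matrix.mulVec_mulVec, Matrix.mul_nonsing_inv _ ((regSysMat_posDef hγ hε A).isUnit.map
    Matrix.detMonoidHom), Matrix.one_mulVec]

lemma inv_regSysMat_mulVec_mulVec (hγ : 0 < γ) (hε : 0 < ε) (A : Set (Fin n1 × Fin n2))
    (x : Fin n1 ⊕ Fin n2 → ℝ) : (regSysMat γ ε A)⁻¹ *ᵥ (regSysMat γ ε A *ᵥ x) = x := by
  rw [Matrix.mulVec_mulVec, Matrix.nonsing_inv_mul _ ((regSysMat_posDef hγ hε A).isUnit.map
    Matrix.detMonoidHom), Matrix.one_mulVec]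

variable (c) in
def IsActiveSet (β : PairVec n1 n2) (B : Set (Fin n1 × Fin n2)) : Prop :=
  {p | 0 < slack c β p} ⊆ B ∧ B ⊆ {p | 0 ≤ slack c β p}

variable (c) in
lemma isActiveSet_posSet (β : PairVec n1 n2) : IsActiveSet c β {p | 0 < slack c β p} :=
  ⟨subset_rfl, fun _ hp => le_of_lt (show 0 < slack c β _ from hp)⟩

lemma IsActiveSet.max_slack_eq {β : PairVec n1 n2} {B : Set (Fin n1 × Fin n2)}
    (h : IsActiveSet c β B) (p : Fin n1 × Fin n2) :
    max (slack c β p) 0 = chiMat B p.1 p.2 * slack c β p := by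
  by_cases hp : p ∈ B
  · rw [chiMat_mem hp, one_mul, max_eq_left (h.2 hp)]
  · rw [chiMat_notMem hp, zero_mul, max_eq_right (not_lt.1 fun hpos => hp (h.1 hpos))]

lemma stack_planMarg_sub {α β : PairVec n1 n2} {B : Set (Fin n1 × Fin n2)}
    (hα : IsActiveSet c α B) (hβ : IsActiveSet c β B) :
    stack (planMarg c α - planMarg c β) = sysMat B *ᵥ stack (α - β) := by
  ext (i | j)
  · simp only [stack_inl, Prod.fst_sub, Pi.sub_apply, planMarg, sysMat_mulVec_inl, stack_inr,
      ← Finset.sum_sub_distrib, hα.max_slack_eq, hβ.max_slack_eq, ← mul_sub, slack_sub_slack]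
  · simp only [stack_inr, Prod.snd_sub, Pi.sub_apply, planMarg, sysMat_mulVec_inr, stack_inl,
      ← Finset.sum_sub_distrib, hα.max_slack_eq, hβ.max_slack_eq, ← mul_sub, slack_sub_slack]

variable (γ ε) in
def regMap (B : Set (Fin n1 × Fin n2)) : PairVec n1 n2 →L[ℝ] PairVec n1 n2 :=
  LinearMap.toContinuousLinearMap
    (stack.symm.toLinearMap ∘ₗ (γ⁻¹ • regSysMat γ ε B).mulVecLin ∘ₗ stack.toLinearMap)

lemma stack_regMap (B : Set (Fin n1 × Fin n2)) (x : PairVec n1 n2) :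
    stack (regMap γ ε B x) = γ⁻¹ • (regSysMat γ ε B *ᵥ stack x) := by
  simp [regMap]

lemma dualSysRhs_sub {α β : PairVec n1 n2} {B : Set (Fin n1 × Fin n2)}
    (hα : IsActiveSet c α B) (hβ : IsActiveSet c β B) :
    dualSysRhs c γ ε α - dualSysRhs c γ ε β = regMap γ ε B (α - β) := by
  apply stack.injective
  rw [stack_regMap, regSysMat, add_mulVec, ← stack_planMarg_sub hα hβ, smul_mulVec, one_mulVec,
    ← map_smul, ← map_add, ← map_smul, dualSysRhs, dualSysRhs, ← smul_sub, smul_sub, ← smul_sub]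
  congr 2
  rw [smul_sub]
  abel

lemma regMap_surjective (hγ : 0 < γ) (hε : 0 < ε) (B : Set (Fin n1 × Fin n2)) :
    Function.Surjective (regMap γ ε B) := fun y => by
  refine ⟨stack.symm (γ • ((regSysMat γ ε B)⁻¹ *ᵥ stack y)), stack.injective ?_⟩
  rw [stack_regMap, LinearEquiv.apply_symm_apply, mulVec_smul,
    regSysMat_mulVec_inv_mulVec hγ hε, inv_smul_smul₀ hγ.ne']

def maskedOuterSum (B : Set (Fin n1 × Fin n2)) : PairVec n1 n2 →ₗ[ℝ] (Fin n1 → Fin n2 → ℝ) where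
  toFun x i j := chiMat B i j * (x.1 i + x.2 j)
  map_add' x y := by ext i j; simp only [Prod.fst_add, Prod.snd_add, Pi.add_apply]; ring
  map_smul' a x := by
    ext i j; simp only [Prod.smul_fst, Prod.smul_snd, Pi.smul_apply, smul_eq_mul,
      RingHom.id_apply]; ring

variable (γ ε) in
def planDeriv (B : Set (Fin n1 × Fin n2)) :
    PairVec n1 n2 →L[ℝ] (Fin n1 → Fin n2 → ℝ) :=
  LinearMap.toContinuousLinearMap
    (maskedOuterSum B ∘ₗ stack.symm.toLinearMap ∘ₗ (regSysMat γ ε B)⁻¹.mulVecLin ∘ₗ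
      stack.toLinearMap)

lemma planDeriv_apply (B : Set (Fin n1 × Fin n2)) (h : PairVec n1 n2) (i : Fin n1) (j : Fin n2) :
    planDeriv γ ε B h i j = chiMat B i j * (((regSysMat γ ε B)⁻¹ *ᵥ Sum.elim h.1 h.2) (Sum.inl i)
      + ((regSysMat γ ε B)⁻¹ *ᵥ Sum.elim h.1 h.2) (Sum.inr j)) :=
  rfl

lemma planDeriv_regMap (hγ : 0 < γ) (hε : 0 < ε) (B : Set (Fin n1 × Fin n2))
    (x : PairVec n1 n2) : planDeriv γ ε B (regMap γ ε B x) = γ⁻¹ • maskedOuterSum B x := by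
  have : stack.symm ((regSysMat γ ε B)⁻¹ *ᵥ stack (regMap γ ε B x)) = γ⁻¹ • x := by
    rw [stack_regMap, mulVec_smul, inv_regSysMat_mulVec_mulVec hγ hε, map_smul,
      LinearEquiv.symm_apply_apply]
  simp [planDeriv, this]

lemma smap_sub_smap {μ ν : PairVec n1 n2} {B : Set (Fin n1 × Fin n2)}
    (hμ : IsActiveSet c (F μ) B) (hν : IsActiveSet c (F ν) B) :
    Smap γ c F μ - Smap γ c F ν = γ⁻¹ • maskedOuterSum B (F μ - F ν) := by
  ext i j
  have hμij := hμ.max_slack_eq (i, j)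
  have hνij := hν.max_slack_eq (i, j)
  have hsub := slack_sub_slack c (F μ) (F ν) (i, j)
  simp only [slack] at hμij hνij hsub
  simp only [Smap, Pi.sub_apply, Pi.smul_apply, smul_eq_mul, maskedOuterSum,
    LinearMap.coe_mk, AddHom.coe_mk, hμij, hνij, ← hsub]
  ring

lemma smap_sub_eq_planDeriv (hγ : 0 < γ) (hε : 0 < ε)
    (hF : ∀ μ : (Fin n1 → ℝ) × (Fin n2 → ℝ), DualSys γ ε c μ.1 μ.2 (F μ).1 (F μ).2)
    {μ ν : PairVec n1 n2} {B : Set (Fin n1 × Fin n2)}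
    (hμ : IsActiveSet c (F μ) B) (hν : IsActiveSet c (F ν) B) :
    Smap γ c F μ - Smap γ c F ν = planDeriv γ ε B (μ - ν) := by
  conv_rhs => rw [← dualSysRhs_solution hγ hF μ, ← dualSysRhs_solution hγ hF ν]
  rw [smap_sub_smap hμ hν, dualSysRhs_sub hμ hν, planDeriv_regMap hγ hε]

theorem hasFDerivAt_smap (hγ : 0 < γ) (hε : 0 < ε)
    (hF : ∀ μ : (Fin n1 → ℝ) × (Fin n2 → ℝ), DualSys γ ε c μ.1 μ.2 (F μ).1 (F μ).2)
    {ν : PairVec n1 n2} (h0 : omegaZero c F ν = ∅) :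
    HasFDerivAt (Smap γ c F) (planDeriv γ ε (omegaPlus c F ν)) ν := by
  have hsign : ∀ᶠ ρ in 𝓝 ν, ∀ p, (0 < slack c (F ν) p → 0 < slack c (F ρ) p) ∧
      (slack c (F ν) p < 0 → slack c (F ρ) p < 0) :=
    (((continuous_slack c).comp (continuous_solution hγ hε hF)).tendsto ν).eventually_pos_and_neg
  have hlocal : ∀ᶠ ρ in 𝓝 ν,
      Smap γ c F ρ = Smap γ c F ν + planDeriv γ ε (omegaPlus c F ν) (ρ - ν) := by
    filter_upwards [hsign] with ρ hρ
    refine eq_add_of_sub_eq' (smap_sub_eq_planDeriv hγ hε hF ⟨fun p hp => ?_, fun p hp => ?_⟩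
      (isActiveSet_posSet c (F ν)))
    · have hne : slack c (F ν) p ≠ 0 := fun h => (Set.eq_empty_iff_forall_notMem.1 h0 p) h
      exact lt_of_not_ge fun hle => (hρ p).2 (lt_of_le_of_ne hle hne) |>.not_gt hp
    · exact ((hρ p).1 hp).le
  have haffine : HasFDerivAt (fun ρ => Smap γ c F ν + planDeriv γ ε (omegaPlus c F ν) (ρ - ν))
      (planDeriv γ ε (omegaPlus c F ν)) ν := by
    simpa using ((planDeriv γ ε (omegaPlus c F ν)).hasFDerivAt.comp ν
      ((hasFDerivAt_id ν).sub_const ν)).const_add (Smap γ c F ν)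
  exact haffine.congr_of_eventuallyEq hlocal

lemma apply_regMap_of_isActiveSet (hγ : 0 < γ) (hε : 0 < ε)
    (hF : ∀ μ : (Fin n1 → ℝ) × (Fin n2 → ℝ), DualSys γ ε c μ.1 μ.2 (F μ).1 (F μ).2)
    {ν v : PairVec n1 n2} {p : Fin n1 × Fin n2} {B : Set (Fin n1 × Fin n2)}
    {L : PairVec n1 n2 →L[ℝ] ℝ} (hL : HasFDerivAt (fun μ => Smap γ c F μ p.1 p.2) L ν)
    (hp : slack c (F ν) p = 0) (hB : IsActiveSet c (F ν) B)
    (hBt : ∀ᶠ t in 𝓝[>] (0 : ℝ), IsActiveSet c (F ν + t • v) B) :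
    L (regMap γ ε B v) = γ⁻¹ * max (v.1 p.1 + v.2 p.2) 0 := by
  refine hL.apply_eq_of_eventually_eq_add_smul ?_
  filter_upwards [hBt, self_mem_nhdsWithin] with t ht (htpos : 0 < t)
  have hray : ν + t • regMap γ ε B v = dualSysRhs c γ ε (F ν + t • v) := by
    have hdiff := dualSysRhs_sub (γ := γ) (ε := ε) ht hB
    rw [add_sub_cancel_left, dualSysRhs_solution hγ hF] at hdiff
    rw [← map_smul, ← hdiff, add_sub_cancel]
  have hslack := slack_add_smul c (F ν) v t p
  rw [hp, zero_add] at hslack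
  simp only [hray, Smap, solution_dualSysRhs hγ hε hF]
  simp only [slack] at hslack hp
  have hmax : max (t * (v.1 p.1 + v.2 p.2)) 0 = t * max (v.1 p.1 + v.2 p.2) 0 := by
    rw [mul_max_of_nonneg _ _ htpos.le, mul_zero]
  rw [hslack, hp, hmax, max_self, smul_eq_mul]
  ring

theorem not_differentiableAt_smap (hγ : 0 < γ) (hε : 0 < ε)
    (hF : ∀ μ : (Fin n1 → ℝ) × (Fin n2 → ℝ), DualSys γ ε c μ.1 μ.2 (F μ).1 (F μ).2)
    {ν : PairVec n1 n2} (h0 : (omegaZero c F ν).Nonempty) :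
    ¬ DifferentiableAt ℝ (Smap γ c F) ν := by
  intro hd
  obtain ⟨p, hp⟩ := h0
  set L : PairVec n1 n2 →L[ℝ] ℝ := (ContinuousLinearMap.proj (R := ℝ) p.2).comp
    ((ContinuousLinearMap.proj (R := ℝ) p.1).comp (fderiv ℝ (Smap γ c F) ν))
  have hL : HasFDerivAt (fun μ => Smap γ c F μ p.1 p.2) L ν := by
    have hrow := (hasFDerivAt_apply (𝕜 := ℝ) p.1 (Smap γ c F ν)).comp ν hd.hasFDerivAt
    exact (hasFDerivAt_apply (𝕜 := ℝ) p.2 (Smap γ c F ν p.1)).comp ν hrow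
  -- along `1` every index of `Ω₀(ν)` becomes active, along directions with negative outer sums
  -- inactive, and the corresponding one-sided derivatives at `p` differ
  have hplus : L (regMap γ ε {q | 0 ≤ slack c (F ν) q} 1) = γ⁻¹ * 2 := by
    rw [apply_regMap_of_isActiveSet (B := {q | 0 ≤ slack c (F ν) q}) hγ hε hF hL hp
      ⟨fun q hq => le_of_lt (show 0 < slack c (F ν) q from hq), subset_rfl⟩]
    · norm_num
    filter_upwards [eventually_slack_add_smul c (F ν) 1] with t ⟨ht, hs⟩
    refine ⟨fun q hq => not_lt.1 fun hneg => ((hs q).2 hneg).not_gt hq, fun q hq => ?_⟩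
    have hq : 0 ≤ slack c (F ν) q := hq
    show 0 ≤ slack c (F ν + t • 1) q
    rw [slack_add_smul]
    norm_num
    positivity
  have hminus : ∀ᶠ v in 𝓝 (-1), L (regMap γ ε (omegaPlus c F ν) v) = 0 := by
    have hneg : ∀ᶠ v in 𝓝 (-1 : PairVec n1 n2), ∀ q : Fin n1 × Fin n2, v.1 q.1 + v.2 q.2 < 0 :=
      ((show Continuous fun v : PairVec n1 n2 => fun q : Fin n1 × Fin n2 => v.1 q.1 + v.2 q.2
        by fun_prop).tendsto (-1)).eventually_pos_and_neg.mono fun v hv q =>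
          (hv q).2 (by norm_num)
    filter_upwards [hneg] with v hv
    rw [apply_regMap_of_isActiveSet (B := omegaPlus c F ν) hγ hε hF hL hp
      (isActiveSet_posSet c (F ν)), max_eq_right (hv p).le, mul_zero]
    filter_upwards [eventually_slack_add_smul c (F ν) v] with t ⟨ht, hs⟩
    refine ⟨fun q hq => ?_, fun q hq => ((hs q).1 hq).le⟩
    have hq : 0 < slack c (F ν + t • v) q := hq
    show 0 < slack c (F ν) q
    rw [slack_add_smul] at hq
    nlinarith [hv q]
  obtain ⟨u, hu⟩ := regMap_surjective hγ hε (omegaPlus c F ν)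
    (regMap γ ε {q | 0 ≤ slack c (F ν) q} 1)
  have := DFunLike.congr_fun
    (ContinuousLinearMap.eq_zero_of_eventually_eq_zero (L := L.comp (regMap γ ε _)) hminus) u
  simp [hu, hplus, hγ.ne'] at this

lemma exists_hasOuterStructure_of_signs {α α' : PairVec n1 n2}
    (hsign : ∀ p, (0 < slack c α p → 0 < slack c α' p) ∧ (slack c α p < 0 → slack c α' p < 0))
    (h0 : ∀ p, slack c α' p ≠ 0) :
    ∃ A ⊆ {p | slack c α p = 0}, HasOuterStructure A {p | slack c α p = 0} ∧
      {p | 0 < slack c α p} ∪ A = {p | 0 < slack c α' p} := by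
  refine ⟨{p | 0 < slack c α' p ∧ slack c α p = 0}, fun p hp => hp.2,
    ⟨(α' - α).1, (α' - α).2, fun p hp => ?_, fun p hp => ?_⟩, Set.ext fun p => ⟨?_, fun hp => ?_⟩⟩
  · rw [← slack_sub_slack, hp.2, sub_zero]
    exact hp.1
  · rw [← slack_sub_slack, hp.1, sub_zero]
    exact lt_of_le_of_ne (not_lt.1 fun hpos => hp.2 ⟨hpos, hp.1⟩) (h0 p)
  · rintro (hp | hp)
    exacts [(hsign p).1 hp, hp.1]
  · rcases lt_trichotomy (slack c α p) 0 with hneg | hzero | hpos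
    · exact absurd hp ((hsign p).2 hneg).not_gt
    · exact Or.inr ⟨hp, hzero⟩
    · exact Or.inl hpos

theorem exists_hasOuterStructure_of_tendsto_fderiv (hγ : 0 < γ) (hε : 0 < ε)
    (hF : ∀ μ : (Fin n1 → ℝ) × (Fin n2 → ℝ), DualSys γ ε c μ.1 μ.2 (F μ).1 (F μ).2)
    {μ : PairVec n1 n2} {μs : ℕ → PairVec n1 n2}
    {G : PairVec n1 n2 →L[ℝ] (Fin n1 → Fin n2 → ℝ)} (hμs : Tendsto μs atTop (𝓝 μ))
    (hd : ∀ k, DifferentiableAt ℝ (Smap γ c F) (μs k))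
    (hG : Tendsto (fun k => fderiv ℝ (Smap γ c F) (μs k)) atTop (𝓝 G)) :
    ∃ A ⊆ omegaZero c F μ, HasOuterStructure A (omegaZero c F μ) ∧
      G = planDeriv γ ε (omegaPlus c F μ ∪ A) := by
  have h0 : ∀ k, omegaZero c F (μs k) = ∅ := fun k =>
    Set.not_nonempty_iff_eq_empty.1 fun hne => not_differentiableAt_smap hγ hε hF hne (hd k)
  obtain ⟨B, hB⟩ := Finite.exists_infinite_fiber fun k => omegaPlus c F (μs k)
  have hfreq : ∃ᶠ k in atTop, omegaPlus c F (μs k) = B :=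
    Nat.frequently_atTop_iff_infinite.2 (Set.infinite_coe_iff.1 hB)
  have hGB : G = planDeriv γ ε B := tendsto_nhds_unique_of_frequently_eq hG tendsto_const_nhds
    (hfreq.mono fun k hk => by rw [(hasFDerivAt_smap hγ hε hF (h0 k)).fderiv, hk])
  have hsign := (((continuous_slack c).comp (continuous_solution hγ hε hF)).tendsto μ).comp
    hμs |>.eventually_pos_and_neg
  obtain ⟨k, hk, hks⟩ := (hfreq.and_eventually hsign).exists
  obtain ⟨A, hA, hout, hunion⟩ := exists_hasOuterStructure_of_signs hks
    fun p hp => (Set.eq_empty_iff_forall_notMem.1 (h0 k) p) hp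
  exact ⟨A, hA, hout, by rw [hGB, ← hk]; exact congrArg _ hunion.symm⟩

theorem exists_tendsto_hasFDerivAt_planDeriv (hγ : 0 < γ) (hε : 0 < ε)
    (hF : ∀ μ : (Fin n1 → ℝ) × (Fin n2 → ℝ), DualSys γ ε c μ.1 μ.2 (F μ).1 (F μ).2)
    {μ : PairVec n1 n2} {A : Set (Fin n1 × Fin n2)} (hA : A ⊆ omegaZero c F μ)
    (hout : HasOuterStructure A (omegaZero c F μ)) :
    ∃ μs : ℕ → PairVec n1 n2, Tendsto μs atTop (𝓝 μ) ∧
      ∀ k, HasFDerivAt (Smap γ c F) (planDeriv γ ε (omegaPlus c F μ ∪ A)) (μs k) := by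
  obtain ⟨v1, v2, hpos, hneg⟩ := hout
  have hray : Tendsto (fun t : ℝ => dualSysRhs c γ ε (F μ + t • (v1, v2))) (𝓝[>] 0) (𝓝 μ) := by
    have hcont : Continuous fun t : ℝ => dualSysRhs c γ ε (F μ + t • (v1, v2)) :=
      (continuous_dualSysRhs c γ ε).comp (by fun_prop)
    simpa [dualSysRhs_solution hγ hF] using (hcont.tendsto 0).mono_left nhdsWithin_le_nhds
  -- moving the potentials along the outer structure activates `A` and deactivates `Ω₀ \ A`
  have hsplit : ∀ᶠ t in 𝓝[>] (0 : ℝ), ∀ p, slack c (F μ + t • (v1, v2)) p ≠ 0 ∧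
      (0 < slack c (F μ + t • (v1, v2)) p ↔ p ∈ omegaPlus c F μ ∪ A) := by
    filter_upwards [eventually_slack_add_smul c (F μ) (v1, v2)] with t ⟨ht, hs⟩ p
    rcases lt_trichotomy (slack c (F μ) p) 0 with hlt | hzero | hgt
    · have hpA : p ∉ A := fun hp => hlt.ne (hA hp)
      exact ⟨((hs p).2 hlt).ne, ⟨fun h => absurd h ((hs p).2 hlt).not_gt,
        fun h => h.elim (fun h => absurd h hlt.not_gt) (absurd · hpA)⟩⟩
    · rw [slack_add_smul, hzero, zero_add]
      by_cases hpA : p ∈ A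
      · have := mul_pos ht (hpos p hpA)
        exact ⟨this.ne', iff_of_true this (Or.inr hpA)⟩
      · have := mul_neg_of_pos_of_neg ht (hneg p ⟨hzero, hpA⟩)
        refine ⟨this.ne, iff_of_false this.not_gt fun h => h.elim (fun h => ?_) hpA⟩
        exact (show 0 < slack c (F μ) p from h).ne' hzero
    · exact ⟨((hs p).1 hgt).ne', iff_of_true ((hs p).1 hgt) (Or.inl hgt)⟩
  have hgood : ∀ᶠ t in 𝓝[>] (0 : ℝ),
      omegaZero c F (dualSysRhs c γ ε (F μ + t • (v1, v2))) = ∅ ∧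
        omegaPlus c F (dualSysRhs c γ ε (F μ + t • (v1, v2))) = omegaPlus c F μ ∪ A := by
    filter_upwards [hsplit] with t ht
    simp only [omegaZero, omegaPlus, solution_dualSysRhs hγ hε hF]
    exact ⟨Set.eq_empty_iff_forall_notMem.2 fun p => (ht p).1, Set.ext fun p => (ht p).2⟩
  obtain ⟨μs, hμs, hk⟩ := exists_seq_forall_of_frequently
    (hray.frequently (p := fun ν => omegaZero c F ν = ∅ ∧ omegaPlus c F ν = omegaPlus c F μ ∪ A)
      hgood.frequently)
  exact ⟨μs, hμs, fun k => (hk k).2 ▸ hasFDerivAt_smap hγ hε hF (hk k).1⟩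

end RegOT

open RegOT

theorem Smap_bouligand_subdifferential_general (n1 n2 : ℕ)
    (γ ε : ℝ) (hγ : 0 < γ) (hε : 0 < ε) (c : Fin n1 → Fin n2 → ℝ)
    (F : (Fin n1 → ℝ) × (Fin n2 → ℝ) → (Fin n1 → ℝ) × (Fin n2 → ℝ))
    (hF : ∀ μ : (Fin n1 → ℝ) × (Fin n2 → ℝ), DualSys γ ε c μ.1 μ.2 (F μ).1 (F μ).2)
    (μ : (Fin n1 → ℝ) × (Fin n2 → ℝ))
    (G : ((Fin n1 → ℝ) × (Fin n2 → ℝ)) →L[ℝ] (Fin n1 → Fin n2 → ℝ)) :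
    (∃ μs : ℕ → (Fin n1 → ℝ) × (Fin n2 → ℝ),
      Tendsto μs atTop (𝓝 μ) ∧
      (∀ k, DifferentiableAt ℝ (Smap γ c F) (μs k)) ∧
      Tendsto (fun k => fderiv ℝ (Smap γ c F) (μs k)) atTop (𝓝 G)) ↔
    (∃ A : Set (Fin n1 × Fin n2), A ⊆ omegaZero c F μ ∧
      HasOuterStructure A (omegaZero c F μ) ∧
      ∀ h : (Fin n1 → ℝ) × (Fin n2 → ℝ), ∀ i j,
        G h i j =
          chiMat (omegaPlus c F μ ∪ A) i j *
            (((sysMat (omegaPlus c F μ ∪ A) +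
                (γ * ε) • (1 : Matrix (Fin n1 ⊕ Fin n2) (Fin n1 ⊕ Fin n2) ℝ))⁻¹).mulVec
                (Sum.elim h.1 h.2) (Sum.inl i) +
              ((sysMat (omegaPlus c F μ ∪ A) +
                (γ * ε) • (1 : Matrix (Fin n1 ⊕ Fin n2) (Fin n1 ⊕ Fin n2) ℝ))⁻¹).mulVec
                (Sum.elim h.1 h.2) (Sum.inr j))) := by
  constructor
  · rintro ⟨μs, hμs, hd, hG⟩
    obtain ⟨A, hA, hout, rfl⟩ := exists_hasOuterStructure_of_tendsto_fderiv hγ hε hF hμs hd hG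
    exact ⟨A, hA, hout, planDeriv_apply _⟩
  · rintro ⟨A, hA, hout, hGA⟩
    obtain ⟨μs, hμs, hder⟩ := exists_tendsto_hasFDerivAt_planDeriv hγ hε hF hA hout
    have hGA : G = planDeriv γ ε (omegaPlus c F μ ∪ A) := ContinuousLinearMap.ext fun h =>
      funext₂ fun i j => (hGA h i j).trans (planDeriv_apply _ h i j).symm
    refine ⟨μs, hμs, fun k => (hder k).differentiableAt, ?_⟩
    simpa only [(hder _).fderiv, hGA] using tendsto_const_nhds

/-- Characterization of the Bouligand subdifferential of S_{γ,ε} at points of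
non-differentiability. -/
theorem Smap_bouligand_subdifferential (n1 n2 : ℕ) (hn1 : 0 < n1) (hn2 : 0 < n2)
    (γ ε : ℝ) (hγ : 0 < γ) (hε : 0 < ε) (c : Fin n1 → Fin n2 → ℝ)
    (F : (Fin n1 → ℝ) × (Fin n2 → ℝ) → (Fin n1 → ℝ) × (Fin n2 → ℝ))
    (hF : ∀ μ : (Fin n1 → ℝ) × (Fin n2 → ℝ), DualSys γ ε c μ.1 μ.2 (F μ).1 (F μ).2)
    (μ : (Fin n1 → ℝ) × (Fin n2 → ℝ))
    (hΩ0 : (omegaZero c F μ).Nonempty)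
    (G : ((Fin n1 → ℝ) × (Fin n2 → ℝ)) →L[ℝ] (Fin n1 → Fin n2 → ℝ)) :
    (∃ μs : ℕ → (Fin n1 → ℝ) × (Fin n2 → ℝ),
      Tendsto μs atTop (𝓝 μ) ∧
      (∀ k, DifferentiableAt ℝ (Smap γ c F) (μs k)) ∧
      Tendsto (fun k => fderiv ℝ (Smap γ c F) (μs k)) atTop (𝓝 G)) ↔
    (∃ A : Set (Fin n1 × Fin n2), A ⊆ omegaZero c F μ ∧
      HasOuterStructure A (omegaZero c F μ) ∧
      ∀ h : (Fin n1 → ℝ) × (Fin n2 → ℝ), ∀ i j,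
        G h i j =
          chiMat (omegaPlus c F μ ∪ A) i j *
            (((sysMat (omegaPlus c F μ ∪ A) +
                (γ * ε) • (1 : Matrix (Fin n1 ⊕ Fin n2) (Fin n1 ⊕ Fin n2) ℝ))⁻¹).mulVec
                (Sum.elim h.1 h.2) (Sum.inl i) +
              ((sysMat (omegaPlus c F μ ∪ A) +
                (γ * ε) • (1 : Matrix (Fin n1 ⊕ Fin n2) (Fin n1 ⊕ Fin n2) ℝ))⁻¹).mulVec
                (Sum.elim h.1 h.2) (Sum.inr j))) :=
  Smap_bouligand_subdifferential_general n1 n2 γ ε hγ hε c F hF μ G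
end
end

section
/- Let n1, n2 be positive integers, let γ > 0 and ε > 0, and let c ∈ ℝ^{n1×n2}. Let μ = (μ1, μ2) ∈ ℝ^{n1} × ℝ^{n2} be a point with Ω_0(μ) = ∅. Then there exists an open neighborhood U of μ such that for every ν ∈ U one has Ω_0(ν) = ∅ and Ω_+(ν) = Ω_+(μ); consequently S_{γ,ε} is Fréchet differentiable at every point of U and its Fréchet derivative is constant on U (equal to its Fréchet derivative at μ), so S_{γ,ε} is continuously differentiable in a neighborhood of μ. -/
noncomputable section

theorem max_sub_mono (a b : ℝ) : 0 ≤ (max a 0 - max b 0) * (a - b) := by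
  rcases le_total a b with h | h
  · have h1 : max a 0 ≤ max b 0 := max_le_max h le_rfl
    nlinarith [mul_nonneg (sub_nonneg.mpr h1) (sub_nonneg.mpr h)]
  · have h1 : max b 0 ≤ max a 0 := max_le_max h le_rfl
    exact mul_nonneg (by linarith) (by linarith)

theorem dual_lip {n1 n2 : ℕ} {γ ε : ℝ} (hγ : 0 < γ) (hε : 0 < ε)
    (c : Fin n1 → Fin n2 → ℝ)
    {μ1 ν1 : Fin n1 → ℝ} {μ2 ν2 : Fin n2 → ℝ} {α1 β1 : Fin n1 → ℝ} {α2 β2 : Fin n2 → ℝ}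
    (hα : DualSys γ ε c μ1 μ2 α1 α2) (hβ : DualSys γ ε c ν1 ν2 β1 β2) :
    ε ^ 2 * (∑ i, (α1 i - β1 i) ^ 2 + ∑ j, (α2 j - β2 j) ^ 2) ≤
      ∑ i, (μ1 i - ν1 i) ^ 2 + ∑ j, (μ2 j - ν2 j) ^ 2 := by
  set S : ℝ := ∑ i, (α1 i - β1 i) ^ 2 + ∑ j, (α2 j - β2 j) ^ 2 with hS
  set S' : ℝ := ∑ i, (μ1 i - ν1 i) ^ 2 + ∑ j, (μ2 j - ν2 j) ^ 2 with hS'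
  set T : ℝ := ∑ i, (μ1 i - ν1 i) * (α1 i - β1 i) + ∑ j, (μ2 j - ν2 j) * (α2 j - β2 j) with hT
  have key1 : ∀ i, γ * (μ1 i - ν1 i) =
      (∑ j, (max (α1 i + α2 j - c i j) 0 - max (β1 i + β2 j - c i j) 0)) +
        γ * ε * (α1 i - β1 i) := by
    intro i
    have h1 := hα.1 i
    have h2 := hβ.1 i
    rw [Finset.sum_sub_distrib]
    ring_nf
    ring_nf at h1 h2
    linarith
  have key2 : ∀ j, γ * (μ2 j - ν2 j) =
      (∑ i, (max (α1 i + α2 j - c i j) 0 - max (β1 i + β2 j - c i j) 0)) +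
        γ * ε * (α2 j - β2 j) := by
    intro j
    have h1 := hα.2 j
    have h2 := hβ.2 j
    rw [Finset.sum_sub_distrib]
    ring_nf
    ring_nf at h1 h2
    linarith
  -- monotonicity : γ * ε * S ≤ γ * T
  have hmono : γ * ε * S ≤ γ * T := by
    have hexp : γ * T =
        (∑ i, ∑ j, (max (α1 i + α2 j - c i j) 0 - max (β1 i + β2 j - c i j) 0) *
          ((α1 i - β1 i) + (α2 j - β2 j))) + γ * ε * S := by
      have e1 : γ * T = ∑ i, (γ * (μ1 i - ν1 i)) * (α1 i - β1 i) +
          ∑ j, (γ * (μ2 j - ν2 j)) * (α2 j - β2 j) := by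
        rw [hT, mul_add, Finset.mul_sum, Finset.mul_sum]
        congr 1 <;> exact Finset.sum_congr rfl fun _ _ => by ring
      rw [e1]
      have e2 : ∀ i, (γ * (μ1 i - ν1 i)) * (α1 i - β1 i) =
          (∑ j, (max (α1 i + α2 j - c i j) 0 - max (β1 i + β2 j - c i j) 0) * (α1 i - β1 i)) +
            γ * ε * (α1 i - β1 i) ^ 2 := by
        intro i
        rw [key1 i, add_mul, Finset.sum_mul]
        ring
      have e3 : ∀ j, (γ * (μ2 j - ν2 j)) * (α2 j - β2 j) =
          (∑ i, (max (α1 i + α2 j - c i j) 0 - max (β1 i + β2 j - c i j) 0) * (α2 j - β2 j)) +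
            γ * ε * (α2 j - β2 j) ^ 2 := by
        intro j
        rw [key2 j, add_mul, Finset.sum_mul]
        ring
      rw [Finset.sum_congr rfl fun i _ => e2 i, Finset.sum_congr rfl fun j _ => e3 j]
      rw [Finset.sum_add_distrib, Finset.sum_add_distrib]
      rw [← Finset.mul_sum, ← Finset.mul_sum]
      have comm : ∑ x : Fin n2, ∑ i : Fin n1,
          (max (α1 i + α2 x - c i x) 0 - max (β1 i + β2 x - c i x) 0) * (α2 x - β2 x)
          = ∑ i : Fin n1, ∑ x : Fin n2,
          (max (α1 i + α2 x - c i x) 0 - max (β1 i + β2 x - c i x) 0) * (α2 x - β2 x) :=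
        Finset.sum_comm
      have split : (∑ i, ∑ j, (max (α1 i + α2 j - c i j) 0 - max (β1 i + β2 j - c i j) 0) *
          ((α1 i - β1 i) + (α2 j - β2 j))) =
          (∑ i, ∑ j, (max (α1 i + α2 j - c i j) 0 - max (β1 i + β2 j - c i j) 0) * (α1 i - β1 i)) +
          (∑ i, ∑ j, (max (α1 i + α2 j - c i j) 0 - max (β1 i + β2 j - c i j) 0) * (α2 j - β2 j)) := by
        rw [← Finset.sum_add_distrib]
        refine Finset.sum_congr rfl fun i _ => ?_
        rw [← Finset.sum_add_distrib]
        exact Finset.sum_congr rfl fun j _ => by ring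
      rw [comm, split, hS]
      ring
    rw [hexp]
    have hnn : 0 ≤ ∑ i, ∑ j, (max (α1 i + α2 j - c i j) 0 - max (β1 i + β2 j - c i j) 0) *
        ((α1 i - β1 i) + (α2 j - β2 j)) := by
      apply Finset.sum_nonneg
      intro i _
      apply Finset.sum_nonneg
      intro j _
      have := max_sub_mono (α1 i + α2 j - c i j) (β1 i + β2 j - c i j)
      have heq : (α1 i + α2 j - c i j) - (β1 i + β2 j - c i j) =
          (α1 i - β1 i) + (α2 j - β2 j) := by ring
      rwa [heq] at this
    linarith
  have hεST : ε * S ≤ T := by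
    have h := hmono
    have : γ * (ε * S) ≤ γ * T := by linarith
    exact le_of_mul_le_mul_left this hγ
  -- Cauchy-Schwarz over the sum type
  have hCS : T ^ 2 ≤ S' * S := by
    have := Finset.sum_mul_sq_le_sq_mul_sq (Finset.univ : Finset (Fin n1 ⊕ Fin n2))
      (Sum.elim (fun i => μ1 i - ν1 i) (fun j => μ2 j - ν2 j))
      (Sum.elim (fun i => α1 i - β1 i) (fun j => α2 j - β2 j))
    simpa [Fintype.sum_sum_type, hT, hS, hS'] using this
  have hSnn : 0 ≤ S := by
    rw [hS]
    apply add_nonneg <;> exact Finset.sum_nonneg fun _ _ => sq_nonneg _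
  rcases eq_or_lt_of_le hSnn with h0 | hpos
  · rw [← h0, mul_zero]
    rw [hS']
    apply add_nonneg <;> exact Finset.sum_nonneg fun _ _ => sq_nonneg _
  · have hT0 : 0 ≤ ε * S := le_of_lt (mul_pos hε hpos)
    have h1 : (ε * S) ^ 2 ≤ T ^ 2 := by nlinarith [hεST]
    have h2 : ε ^ 2 * S * S ≤ S' * S := by nlinarith [h1, hCS]
    exact le_of_mul_le_mul_right h2 hpos

open Classical in
/-- The linearized dual operator for a fixed active pattern `P`. -/
noncomputable def Tlin {n1 n2 : ℕ} (γ ε : ℝ) (P : Fin n1 × Fin n2 → Prop) :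
    ((Fin n1 → ℝ) × (Fin n2 → ℝ)) →ₗ[ℝ] ((Fin n1 → ℝ) × (Fin n2 → ℝ)) where
  toFun x := (fun i => (∑ j, if P (i, j) then x.1 i + x.2 j else 0) + γ * ε * x.1 i,
              fun j => (∑ i, if P (i, j) then x.1 i + x.2 j else 0) + γ * ε * x.2 j)
  map_add' x y := by
    refine Prod.ext ?_ ?_ <;> funext k <;>
      simp only [Prod.fst_add, Prod.snd_add, Pi.add_apply]
    · have h : ∀ j, (if P (k, j) then (x.1 k + y.1 k) + (x.2 j + y.2 j) else 0)
          = (if P (k, j) then x.1 k + x.2 j else 0) + (if P (k, j) then y.1 k + y.2 j else 0) := by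
        intro j; split <;> ring
      simp only [h, Finset.sum_add_distrib]; ring
    · have h : ∀ i, (if P (i, k) then (x.1 i + y.1 i) + (x.2 k + y.2 k) else 0)
          = (if P (i, k) then x.1 i + x.2 k else 0) + (if P (i, k) then y.1 i + y.2 k else 0) := by
        intro i; split <;> ring
      simp only [h, Finset.sum_add_distrib]; ring
  map_smul' r x := by
    refine Prod.ext ?_ ?_ <;> funext k <;>
      simp only [Prod.smul_fst, Prod.smul_snd, Pi.smul_apply, smul_eq_mul, RingHom.id_apply]
    · have h : ∀ j, (if P (k, j) then r * x.1 k + r * x.2 j else 0)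
          = r * (if P (k, j) then x.1 k + x.2 j else 0) := by
        intro j; split <;> ring
      simp only [h, ← Finset.mul_sum]; ring
    · have h : ∀ i, (if P (i, k) then r * x.1 i + r * x.2 k else 0)
          = r * (if P (i, k) then x.1 i + x.2 k else 0) := by
        intro i; split <;> ring
      simp only [h, ← Finset.mul_sum]; ring

open Classical in
/-- The linearized plan operator for a fixed active pattern `P`. -/
noncomputable def Mlin {n1 n2 : ℕ} (P : Fin n1 × Fin n2 → Prop) :
    ((Fin n1 → ℝ) × (Fin n2 → ℝ)) →ₗ[ℝ] (Fin n1 → Fin n2 → ℝ) where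
  toFun x := fun i j => if P (i, j) then x.1 i + x.2 j else 0
  map_add' x y := by
    funext i j
    simp only [Prod.fst_add, Prod.snd_add, Pi.add_apply]
    split <;> ring
  map_smul' r x := by
    funext i j
    simp only [Prod.smul_fst, Prod.smul_snd, Pi.smul_apply, smul_eq_mul, RingHom.id_apply]
    split <;> ring

open Classical in
theorem Tlin_inj {n1 n2 : ℕ} {γ ε : ℝ} (hγ : 0 < γ) (hε : 0 < ε)
    (P : Fin n1 × Fin n2 → Prop) : Function.Injective (Tlin γ ε P) := by
  rw [← LinearMap.ker_eq_bot, LinearMap.ker_eq_bot']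
  intro x hx
  have h1 : ∀ i, (∑ j, if P (i, j) then x.1 i + x.2 j else 0) + γ * ε * x.1 i = 0 := by
    intro i
    have := congrArg (fun z => z.1 i) hx
    simpa [Tlin] using this
  have h2 : ∀ j, (∑ i, if P (i, j) then x.1 i + x.2 j else 0) + γ * ε * x.2 j = 0 := by
    intro j
    have := congrArg (fun z => z.2 j) hx
    simpa [Tlin] using this
  -- pair with x
  have hQ : (∑ i, ∑ j, (if P (i, j) then (x.1 i + x.2 j) ^ 2 else 0)) +
      γ * ε * ((∑ i, (x.1 i) ^ 2) + ∑ j, (x.2 j) ^ 2) = 0 := by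
    have e1 : ∀ i, (∑ j, (if P (i, j) then (x.1 i + x.2 j) else 0) * x.1 i) +
        γ * ε * (x.1 i) ^ 2 = 0 := by
      intro i
      have h : ((∑ j, if P (i, j) then x.1 i + x.2 j else 0) + γ * ε * x.1 i) * x.1 i = 0 := by
        rw [h1 i]; ring
      rw [add_mul, Finset.sum_mul] at h
      linear_combination h
    have e2 : ∀ j, (∑ i, (if P (i, j) then (x.1 i + x.2 j) else 0) * x.2 j) +
        γ * ε * (x.2 j) ^ 2 = 0 := by
      intro j
      have h : ((∑ i, if P (i, j) then x.1 i + x.2 j else 0) + γ * ε * x.2 j) * x.2 j = 0 := by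
        rw [h2 j]; ring
      rw [add_mul, Finset.sum_mul] at h
      linear_combination h
    have E1 : (∑ i, ∑ j, (if P (i, j) then (x.1 i + x.2 j) else 0) * x.1 i) +
        γ * ε * (∑ i, (x.1 i) ^ 2) = 0 := by
      rw [Finset.mul_sum, ← Finset.sum_add_distrib]
      exact Finset.sum_eq_zero fun i _ => e1 i
    have E2 : (∑ j, ∑ i, (if P (i, j) then (x.1 i + x.2 j) else 0) * x.2 j) +
        γ * ε * (∑ j, (x.2 j) ^ 2) = 0 := by
      rw [Finset.mul_sum, ← Finset.sum_add_distrib]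
      exact Finset.sum_eq_zero fun j _ => e2 j
    have comm : (∑ j, ∑ i, (if P (i, j) then (x.1 i + x.2 j) else 0) * x.2 j)
        = ∑ i, ∑ j, (if P (i, j) then (x.1 i + x.2 j) else 0) * x.2 j := Finset.sum_comm
    rw [comm] at E2
    have merge : (∑ i, ∑ j, (if P (i, j) then (x.1 i + x.2 j) ^ 2 else 0))
        = (∑ i, ∑ j, (if P (i, j) then (x.1 i + x.2 j) else 0) * x.1 i) +
          (∑ i, ∑ j, (if P (i, j) then (x.1 i + x.2 j) else 0) * x.2 j) := by
      rw [← Finset.sum_add_distrib]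
      refine Finset.sum_congr rfl fun i _ => ?_
      rw [← Finset.sum_add_distrib]
      refine Finset.sum_congr rfl fun j _ => ?_
      split <;> ring
    rw [merge]
    linarith [E1, E2]
  have hnn : 0 ≤ ∑ i, ∑ j, (if P (i, j) then (x.1 i + x.2 j) ^ 2 else 0) :=
    Finset.sum_nonneg fun i _ => Finset.sum_nonneg fun j _ => by positivity
  have hs1 : 0 ≤ ∑ i, (x.1 i) ^ 2 := Finset.sum_nonneg fun _ _ => sq_nonneg _
  have hs2 : 0 ≤ ∑ j, (x.2 j) ^ 2 := Finset.sum_nonneg fun _ _ => sq_nonneg _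
  have hz : (∑ i, (x.1 i) ^ 2) + ∑ j, (x.2 j) ^ 2 = 0 := by nlinarith [mul_pos hγ hε]
  refine Prod.ext ?_ ?_ <;> funext k
  · have : ∀ i ∈ Finset.univ, (x.1 i) ^ 2 = 0 :=
      (Finset.sum_eq_zero_iff_of_nonneg fun i _ => sq_nonneg _).mp (by linarith)
    simpa using pow_eq_zero_iff (n := 2) (by norm_num) |>.mp (this k (Finset.mem_univ k))
  · have : ∀ j ∈ Finset.univ, (x.2 j) ^ 2 = 0 :=
      (Finset.sum_eq_zero_iff_of_nonneg fun j _ => sq_nonneg _).mp (by linarith)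
    simpa using pow_eq_zero_iff (n := 2) (by norm_num) |>.mp (this k (Finset.mem_univ k))

set_option maxHeartbeats 1000000 in
/-- Around a point with Ω_0(μ) = ∅, the active sets are locally constant and S_{γ,ε}
is continuously differentiable with locally constant derivative. -/
theorem Smap_locally_constant_derivative (n1 n2 : ℕ) (hn1 : 0 < n1) (hn2 : 0 < n2)
    (γ ε : ℝ) (hγ : 0 < γ) (hε : 0 < ε) (c : Fin n1 → Fin n2 → ℝ)
    (F : (Fin n1 → ℝ) × (Fin n2 → ℝ) → (Fin n1 → ℝ) × (Fin n2 → ℝ))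
    (hF : ∀ μ : (Fin n1 → ℝ) × (Fin n2 → ℝ), DualSys γ ε c μ.1 μ.2 (F μ).1 (F μ).2)
    (μ : (Fin n1 → ℝ) × (Fin n2 → ℝ))
    (hΩ0 : omegaZero c F μ = ∅) :
    ∃ U : Set ((Fin n1 → ℝ) × (Fin n2 → ℝ)), IsOpen U ∧ μ ∈ U ∧
      ∀ ν ∈ U, omegaZero c F ν = ∅ ∧ omegaPlus c F ν = omegaPlus c F μ ∧
        DifferentiableAt ℝ (Smap γ c F) ν ∧
        fderiv ℝ (Smap γ c F) ν = fderiv ℝ (Smap γ c F) μ := by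
  classical
  haveI : Nonempty (Fin n1 × Fin n2) := ⟨(⟨0, hn1⟩, ⟨0, hn2⟩)⟩
  have hdne : ∀ p : Fin n1 × Fin n2, (F μ).1 p.1 + (F μ).2 p.2 - c p.1 p.2 ≠ 0 := by
    intro p h0
    have : p ∈ omegaZero c F μ := h0
    rw [hΩ0] at this; exact this
  set δ : ℝ := Finset.univ.inf' Finset.univ_nonempty
    (fun p : Fin n1 × Fin n2 => |(F μ).1 p.1 + (F μ).2 p.2 - c p.1 p.2|) with hδdef
  have hδpos : 0 < δ := by
    rw [hδdef, Finset.lt_inf'_iff]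
    intro p _
    exact abs_pos.mpr (hdne p)
  have hδle : ∀ p : Fin n1 × Fin n2,
      δ ≤ |(F μ).1 p.1 + (F μ).2 p.2 - c p.1 p.2| := fun p =>
    Finset.inf'_le _ (Finset.mem_univ p)
  set N : ℝ := (n1 : ℝ) + n2 with hNdef
  have hN : 0 ≤ N := by positivity
  set r : ℝ := ε * δ / (2 * (N + 1)) with hrdef
  have hrpos : 0 < r := by rw [hrdef]; positivity
  clear_value δ N r
  -- closeness of dual variables on the ball
  have hclose : ∀ ν ∈ Metric.ball μ r,
      (∀ i, |(F ν).1 i - (F μ).1 i| < δ / 2) ∧ (∀ j, |(F ν).2 j - (F μ).2 j| < δ / 2) := by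
    intro ν hν
    have hlip := dual_lip hγ hε c (hF ν) (hF μ)
    have hdist : dist ν μ < r := Metric.mem_ball.mp hν
    have hb1 : ∀ i, (ν.1 i - μ.1 i) ^ 2 ≤ r ^ 2 := by
      intro i
      have h1 : dist (ν.1 i) (μ.1 i) ≤ dist ν μ :=
        le_trans (dist_le_pi_dist ν.1 μ.1 i) (by rw [Prod.dist_eq]; exact le_max_left _ _)
      have h2 : |ν.1 i - μ.1 i| ≤ r := by rw [← Real.dist_eq]; linarith
      calc (ν.1 i - μ.1 i) ^ 2 = |ν.1 i - μ.1 i| ^ 2 := (sq_abs _).symm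
        _ ≤ r ^ 2 := by nlinarith [abs_nonneg (ν.1 i - μ.1 i)]
    have hb2 : ∀ j, (ν.2 j - μ.2 j) ^ 2 ≤ r ^ 2 := by
      intro j
      have h1 : dist (ν.2 j) (μ.2 j) ≤ dist ν μ :=
        le_trans (dist_le_pi_dist ν.2 μ.2 j) (by rw [Prod.dist_eq]; exact le_max_right _ _)
      have h2 : |ν.2 j - μ.2 j| ≤ r := by rw [← Real.dist_eq]; linarith
      calc (ν.2 j - μ.2 j) ^ 2 = |ν.2 j - μ.2 j| ^ 2 := (sq_abs _).symm
        _ ≤ r ^ 2 := by nlinarith [abs_nonneg (ν.2 j - μ.2 j)]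
    have hS' : (∑ i, (ν.1 i - μ.1 i) ^ 2) + ∑ j, (ν.2 j - μ.2 j) ^ 2 ≤ N * r ^ 2 := by
      have s1 : (∑ i, (ν.1 i - μ.1 i) ^ 2) ≤ (n1 : ℝ) * r ^ 2 := by
        calc (∑ i, (ν.1 i - μ.1 i) ^ 2) ≤ ∑ _i : Fin n1, r ^ 2 :=
              Finset.sum_le_sum fun i _ => hb1 i
          _ = (n1 : ℝ) * r ^ 2 := by simp [Finset.sum_const, mul_comm]
      have s2 : (∑ j, (ν.2 j - μ.2 j) ^ 2) ≤ (n2 : ℝ) * r ^ 2 := by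
        calc (∑ j, (ν.2 j - μ.2 j) ^ 2) ≤ ∑ _j : Fin n2, r ^ 2 :=
              Finset.sum_le_sum fun j _ => hb2 j
          _ = (n2 : ℝ) * r ^ 2 := by simp [Finset.sum_const, mul_comm]
      rw [hNdef]; linarith
    have hnum : N * r ^ 2 < ε ^ 2 * (δ / 2) ^ 2 := by
      rw [hrdef, div_pow, ← mul_div_assoc, div_lt_iff₀ (by positivity)]
      have key : 0 < (ε * δ) ^ 2 := by positivity
      nlinarith [key, mul_nonneg key.le (sq_nonneg N), mul_nonneg key.le hN]
    have hSnn1 : 0 ≤ ∑ i, ((F ν).1 i - (F μ).1 i) ^ 2 :=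
      Finset.sum_nonneg fun _ _ => sq_nonneg _
    have hSnn2 : 0 ≤ ∑ j, ((F ν).2 j - (F μ).2 j) ^ 2 :=
      Finset.sum_nonneg fun _ _ => sq_nonneg _
    constructor
    · intro i
      have hterm : ((F ν).1 i - (F μ).1 i) ^ 2 ≤ ∑ i', ((F ν).1 i' - (F μ).1 i') ^ 2 :=
        Finset.single_le_sum (f := fun i' => ((F ν).1 i' - (F μ).1 i') ^ 2)
          (fun _ _ => sq_nonneg _) (Finset.mem_univ i)
      have hA : ε ^ 2 * ((F ν).1 i - (F μ).1 i) ^ 2 ≤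
          ε ^ 2 * ((∑ i', ((F ν).1 i' - (F μ).1 i') ^ 2) +
            ∑ j, ((F ν).2 j - (F μ).2 j) ^ 2) :=
        mul_le_mul_of_nonneg_left (by linarith) (by positivity)
      have h : ε ^ 2 * ((F ν).1 i - (F μ).1 i) ^ 2 < ε ^ 2 * (δ / 2) ^ 2 := by linarith
      have h2 : ((F ν).1 i - (F μ).1 i) ^ 2 < (δ / 2) ^ 2 :=
        lt_of_mul_lt_mul_left h (by positivity)
      nlinarith [abs_nonneg ((F ν).1 i - (F μ).1 i), sq_abs ((F ν).1 i - (F μ).1 i), hδpos]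
    · intro j
      have hterm : ((F ν).2 j - (F μ).2 j) ^ 2 ≤ ∑ j', ((F ν).2 j' - (F μ).2 j') ^ 2 :=
        Finset.single_le_sum (f := fun j' => ((F ν).2 j' - (F μ).2 j') ^ 2)
          (fun _ _ => sq_nonneg _) (Finset.mem_univ j)
      have hA : ε ^ 2 * ((F ν).2 j - (F μ).2 j) ^ 2 ≤
          ε ^ 2 * ((∑ i, ((F ν).1 i - (F μ).1 i) ^ 2) +
            ∑ j', ((F ν).2 j' - (F μ).2 j') ^ 2) :=
        mul_le_mul_of_nonneg_left (by linarith) (by positivity)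
      have h : ε ^ 2 * ((F ν).2 j - (F μ).2 j) ^ 2 < ε ^ 2 * (δ / 2) ^ 2 := by linarith
      have h2 : ((F ν).2 j - (F μ).2 j) ^ 2 < (δ / 2) ^ 2 :=
        lt_of_mul_lt_mul_left h (by positivity)
      nlinarith [abs_nonneg ((F ν).2 j - (F μ).2 j), sq_abs ((F ν).2 j - (F μ).2 j), hδpos]
  -- sign stability on the ball
  have hsign : ∀ ν ∈ Metric.ball μ r, ∀ p : Fin n1 × Fin n2,
      (0 < (F ν).1 p.1 + (F ν).2 p.2 - c p.1 p.2 ↔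
        0 < (F μ).1 p.1 + (F μ).2 p.2 - c p.1 p.2) ∧
      (F ν).1 p.1 + (F ν).2 p.2 - c p.1 p.2 ≠ 0 := by
    intro ν hν p
    obtain ⟨hc1, hc2⟩ := hclose ν hν
    have hdd : |((F ν).1 p.1 + (F ν).2 p.2 - c p.1 p.2) -
        ((F μ).1 p.1 + (F μ).2 p.2 - c p.1 p.2)| < δ := by
      have heq : ((F ν).1 p.1 + (F ν).2 p.2 - c p.1 p.2) -
          ((F μ).1 p.1 + (F μ).2 p.2 - c p.1 p.2)
          = ((F ν).1 p.1 - (F μ).1 p.1) + ((F ν).2 p.2 - (F μ).2 p.2) := by ring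
      rw [heq]
      calc |((F ν).1 p.1 - (F μ).1 p.1) + ((F ν).2 p.2 - (F μ).2 p.2)|
          ≤ |(F ν).1 p.1 - (F μ).1 p.1| + |(F ν).2 p.2 - (F μ).2 p.2| := abs_add_le _ _
        _ < δ := by linarith [hc1 p.1, hc2 p.2]
    have hδle' := hδle p
    have habslt := abs_lt.mp hdd
    rcases lt_or_gt_of_ne (hdne p) with hneg | hpos
    · have habs : |(F μ).1 p.1 + (F μ).2 p.2 - c p.1 p.2|
          = -((F μ).1 p.1 + (F μ).2 p.2 - c p.1 p.2) := abs_of_neg hneg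
      have hνneg : (F ν).1 p.1 + (F ν).2 p.2 - c p.1 p.2 < 0 := by
        rw [habs] at hδle'; linarith
      exact ⟨⟨fun h => absurd h (not_lt.mpr hνneg.le),
        fun h => absurd h (not_lt.mpr hneg.le)⟩, ne_of_lt hνneg⟩
    · have habs : |(F μ).1 p.1 + (F μ).2 p.2 - c p.1 p.2|
          = (F μ).1 p.1 + (F μ).2 p.2 - c p.1 p.2 := abs_of_pos hpos
      have hνpos : 0 < (F ν).1 p.1 + (F ν).2 p.2 - c p.1 p.2 := by
        rw [habs] at hδle'; linarith
      exact ⟨⟨fun _ => hpos, fun _ => hνpos⟩, ne_of_gt hνpos⟩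
  -- the active pattern and linearized objects
  set P : Fin n1 × Fin n2 → Prop :=
    fun p => 0 < (F μ).1 p.1 + (F μ).2 p.2 - c p.1 p.2 with hPdef
  set Te : ((Fin n1 → ℝ) × (Fin n2 → ℝ)) ≃ₗ[ℝ] ((Fin n1 → ℝ) × (Fin n2 → ℝ)) :=
    LinearMap.linearEquivOfInjective (Tlin γ ε P) (Tlin_inj hγ hε P) rfl with hTe
  set b : (Fin n1 → ℝ) × (Fin n2 → ℝ) :=
    (fun i => ∑ j, if P (i, j) then c i j else 0,
     fun j => ∑ i, if P (i, j) then c i j else 0) with hbdef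
  have hTF : ∀ ν ∈ Metric.ball μ r, (Tlin γ ε P) (F ν) = γ • ν + b := by
    intro ν hν
    have hs := hsign ν hν
    have hmax : ∀ i j, (if P (i, j) then (F ν).1 i + (F ν).2 j else 0)
        = max ((F ν).1 i + (F ν).2 j - c i j) 0 + (if P (i, j) then c i j else 0) := by
      intro i j
      by_cases hp : P (i, j)
      · have hpos : 0 < (F ν).1 i + (F ν).2 j - c i j := ((hs (i, j)).1).mpr hp
        rw [if_pos hp, if_pos hp, max_eq_left hpos.le]
        ring
      · have hnp : ¬ (0 < (F ν).1 i + (F ν).2 j - c i j) :=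
          fun h => hp (((hs (i, j)).1).mp h)
        have hneg : (F ν).1 i + (F ν).2 j - c i j ≤ 0 := not_lt.mp hnp
        rw [if_neg hp, if_neg hp, max_eq_right hneg, add_zero]
    refine Prod.ext ?_ ?_ <;> funext k
    · show (∑ j, if P (k, j) then (F ν).1 k + (F ν).2 j else 0) + γ * ε * (F ν).1 k
        = (γ • ν + b).1 k
      rw [Finset.sum_congr rfl fun j _ => hmax k j, Finset.sum_add_distrib]
      have heq := (hF ν).1 k
      show _ = γ * ν.1 k + b.1 k
      rw [hbdef]
      show (∑ j, max ((F ν).1 k + (F ν).2 j - c k j) 0) +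
        (∑ j, if P (k, j) then c k j else 0) + γ * ε * (F ν).1 k
        = γ * ν.1 k + ∑ j, if P (k, j) then c k j else 0
      linarith
    · show (∑ i, if P (i, k) then (F ν).1 i + (F ν).2 k else 0) + γ * ε * (F ν).2 k
        = (γ • ν + b).2 k
      rw [Finset.sum_congr rfl fun i _ => hmax i k, Finset.sum_add_distrib]
      have heq := (hF ν).2 k
      show _ = γ * ν.2 k + b.2 k
      rw [hbdef]
      show (∑ i, max ((F ν).1 i + (F ν).2 k - c i k) 0) +
        (∑ i, if P (i, k) then c i k else 0) + γ * ε * (F ν).2 k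
        = γ * ν.2 k + ∑ i, if P (i, k) then c i k else 0
      linarith
  have hFeq : ∀ ν ∈ Metric.ball μ r, F ν = Te.symm (γ • ν + b) := by
    intro ν hν
    have h : Te (F ν) = γ • ν + b := by
      rw [hTe, LinearMap.linearEquivOfInjective_apply]
      exact hTF ν hν
    calc F ν = Te.symm (Te (F ν)) := (Te.symm_apply_apply _).symm
      _ = Te.symm (γ • ν + b) := by rw [h]
  set Λ : ((Fin n1 → ℝ) × (Fin n2 → ℝ)) →ₗ[ℝ] (Fin n1 → Fin n2 → ℝ) :=
    (Mlin P).comp Te.symm.toLinearMap with hΛdef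
  set Λc : ((Fin n1 → ℝ) × (Fin n2 → ℝ)) →L[ℝ] (Fin n1 → Fin n2 → ℝ) :=
    LinearMap.toContinuousLinearMap Λ with hΛc
  set k0 : Fin n1 → Fin n2 → ℝ :=
    fun i j => if P (i, j) then -((1 / γ) * c i j) else 0 with hk0
  set v0 : Fin n1 → Fin n2 → ℝ := (1 / γ) • (Λ b) + k0 with hv0
  set Hfun : ((Fin n1 → ℝ) × (Fin n2 → ℝ)) → (Fin n1 → Fin n2 → ℝ) :=
    fun ν => Λc ν + v0 with hHfun
  have hSH : ∀ ν ∈ Metric.ball μ r, Smap γ c F ν = Hfun ν := by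
    intro ν hν
    funext i j
    have hs := hsign ν hν
    have hsplit : F ν = γ • Te.symm ν + Te.symm b := by
      rw [hFeq ν hν, map_add, map_smul]
    have e1 : (F ν).1 i = γ * (Te.symm ν).1 i + (Te.symm b).1 i := by rw [hsplit]; rfl
    have e2 : (F ν).2 j = γ * (Te.symm ν).2 j + (Te.symm b).2 j := by rw [hsplit]; rfl
    have hΛν : Λc ν i j = (if P (i, j) then (Te.symm ν).1 i + (Te.symm ν).2 j else 0) := by
      rw [hΛc]
      simp only [LinearMap.coe_toContinuousLinearMap']
      rfl
    have hΛb : Λ b i j = (if P (i, j) then (Te.symm b).1 i + (Te.symm b).2 j else 0) := rfl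
    show (1 / γ) * max ((F ν).1 i + (F ν).2 j - c i j) 0 = Λc ν i j + v0 i j
    have hv0ij : v0 i j = (1 / γ) * (Λ b i j) + k0 i j := rfl
    have hk0ij : k0 i j = if P (i, j) then -((1 / γ) * c i j) else 0 := rfl
    rw [hv0ij, hΛν, hΛb, hk0ij]
    by_cases hp : P (i, j)
    · have hpos : 0 < (F ν).1 i + (F ν).2 j - c i j := ((hs (i, j)).1).mpr hp
      rw [max_eq_left hpos.le, if_pos hp, if_pos hp, if_pos hp, e1, e2]
      field_simp
      ring
    · have hnp : ¬ (0 < (F ν).1 i + (F ν).2 j - c i j) :=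
        fun h => hp (((hs (i, j)).1).mp h)
      rw [max_eq_right (not_lt.mp hnp), if_neg hp, if_neg hp, if_neg hp]
      ring
  have hHd : ∀ x, HasFDerivAt Hfun Λc x := by
    intro x
    rw [hHfun]
    exact (Λc.hasFDerivAt).add_const v0
  refine ⟨Metric.ball μ r, Metric.isOpen_ball, Metric.mem_ball_self hrpos, ?_⟩
  intro ν hν
  have hev : Smap γ c F =ᶠ[nhds ν] Hfun :=
    Filter.eventuallyEq_of_mem (Metric.isOpen_ball.mem_nhds hν) fun x hx => hSH x hx
  have hevμ : Smap γ c F =ᶠ[nhds μ] Hfun :=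
    Filter.eventuallyEq_of_mem
      (Metric.isOpen_ball.mem_nhds (Metric.mem_ball_self hrpos)) fun x hx => hSH x hx
  refine ⟨?_, ?_, ?_, ?_⟩
  · exact Set.eq_empty_iff_forall_notMem.mpr fun p hp => (hsign ν hν p).2 hp
  · exact Set.ext fun p => (hsign ν hν p).1
  · exact hev.differentiableAt_iff.mpr (hHd ν).differentiableAt
  · rw [hev.fderiv_eq, hevμ.fderiv_eq, (hHd ν).fderiv, (hHd μ).fderiv]
end
end
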